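/- arXiv:2001.11288 — 8 statements merged into one kernel-verified Lean document; each statement's English description precedes it below -/
import Mathlib

section
/- For a continuous linear functional λ on C(I, ℂⁿ) and its extension λ_e to bounded Borel maps I → ℂⁿ, the operator norm bound |λ_e β| ≤ ‖λ‖ · sup_{t∈I} |β(t)| holds for every β in the class B_{nA} of maps that are pointwise limits of uniformly bounded sequences of continuous maps. -/
open MeasureTheory Filter Topology

/-- Property (A): pointwise limit of a uniformly bounded sequence of continuous maps. -/
def PropA {X : Type*} [TopologicalSpace X] {E : Type*} [NormedAddCommGroup E]
    (φ : X → E) : Prop :=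
  ∃ f : ℕ → X → E, (∀ m, Continuous (f m)) ∧ (∃ C : ℝ, ∀ m x, ‖f m x‖ ≤ C) ∧
    ∀ x, Tendsto (fun m => f m x) atTop (𝓝 (φ x))

/-- For `λ ∈ C(I,ℂⁿ)*`, with extension `λ_e` defined componentwise by
integration against the Riesz representation measures (`dμ_k = H_k dν_k`,
`|H_k| = 1`), one has `|λ_e β| ≤ ‖λ‖ · sup_{t∈I} |β(t)|` for every `β ∈ B_{nA}`. -/
theorem stmt_3 (n : ℕ) (h : ℝ) (hh : 0 < h)
    (T : C(Set.Icc (-h) (0:ℝ), Fin n → ℂ) →L[ℂ] ℂ)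
    (ν : Fin n → Measure (Set.Icc (-h) (0:ℝ))) (hν : ∀ k, IsFiniteMeasure (ν k))
    (H : Fin n → Set.Icc (-h) (0:ℝ) → ℂ)
    (hHm : ∀ k, Measurable (H k)) (hH1 : ∀ k t, ‖H k t‖ = 1)
    (hrep : ∀ f : C(Set.Icc (-h) (0:ℝ), Fin n → ℂ),
      T f = ∑ k : Fin n, ∫ t, f t k * H k t ∂(ν k))
    (β : Set.Icc (-h) (0:ℝ) → Fin n → ℂ) (hβ : PropA β) :
    ‖∑ k : Fin n, ∫ t, β t k * H k t ∂(ν k)‖ ≤ ‖T‖ * ⨆ t, ‖β t‖ := by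
  obtain ⟨f, hfc, ⟨C, hC⟩, hlim⟩ := hβ
  have hne : Nonempty (Set.Icc (-h) (0:ℝ)) :=
    ⟨⟨0, by constructor <;> linarith⟩⟩
  have hβC : ∀ t, ‖β t‖ ≤ C := fun t =>
    le_of_tendsto' ((hlim t).norm) (fun m => hC m t)
  have hbdd : BddAbove (Set.range fun t => ‖β t‖) := by
    refine ⟨C, ?_⟩; rintro _ ⟨t, rfl⟩; exact hβC t
  set M : ℝ := ⨆ t, ‖β t‖ with hM
  have hβM : ∀ t, ‖β t‖ ≤ M := fun t => le_ciSup hbdd t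
  have hM0 : 0 ≤ M := (norm_nonneg _).trans (hβM hne.some)
  -- main claim with a margin ε
  have key : ∀ ε : ℝ, 0 < ε → ‖∑ k : Fin n, ∫ t, β t k * H k t ∂(ν k)‖ ≤ ‖T‖ * (M + ε) := by
    intro ε hε
    set R : ℝ := M + ε with hR
    have hR0 : 0 < R := by positivity
    set g : (Fin n → ℂ) → (Fin n → ℂ) := fun x => (R / max R ‖x‖) • x with hg
    have hgc : Continuous g := by
      refine (Continuous.div continuous_const (continuous_const.max continuous_norm)
        (fun x => ?_)).smul continuous_id
      exact ne_of_gt (lt_of_lt_of_le hR0 (le_max_left _ _))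
    have hgnorm : ∀ x, ‖g x‖ ≤ R := by
      intro x
      have hmax : 0 < max R ‖x‖ := lt_of_lt_of_le hR0 (le_max_left _ _)
      have : ‖g x‖ = (R / max R ‖x‖) * ‖x‖ := by
        rw [hg, norm_smul, Real.norm_eq_abs, abs_of_nonneg (by positivity)]
      rw [this, div_mul_eq_mul_div, div_le_iff₀ hmax]
      have : ‖x‖ ≤ max R ‖x‖ := le_max_right _ _
      nlinarith [hR0.le]
    have hgid : ∀ x : Fin n → ℂ, ‖x‖ ≤ R → g x = x := by
      intro x hx
      have : max R ‖x‖ = R := max_eq_left hx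
      simp [hg, this, ne_of_gt hR0]
    set F : ℕ → C(Set.Icc (-h) (0:ℝ), Fin n → ℂ) :=
      fun m => ⟨fun t => g (f m t), hgc.comp (hfc m)⟩ with hF
    have hFlim : ∀ t, Tendsto (fun m => F m t) atTop (𝓝 (β t)) := by
      intro t
      have := (hgc.continuousAt (x := β t)).tendsto.comp (hlim t)
      rwa [hgid (β t) ((hβM t).trans (by linarith))] at this
    -- T (F m) tends to the sum of integrals
    have hTlim : Tendsto (fun m => T (F m)) atTop
        (𝓝 (∑ k : Fin n, ∫ t, β t k * H k t ∂(ν k))) := by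
      simp only [hrep]
      refine tendsto_finset_sum _ (fun k _ => ?_)
      haveI := hν k
      refine tendsto_integral_of_dominated_convergence (fun _ => R)
        (fun m => ?_) (integrable_const R) (fun m => ?_) ?_
      · exact (((continuous_apply k).comp (hgc.comp (hfc m))).aestronglyMeasurable).mul
          (hHm k).aestronglyMeasurable
      · filter_upwards with t
        have h1 : ‖F m t k‖ ≤ ‖F m t‖ := norm_le_pi_norm (F m t) k
        calc ‖F m t k * H k t‖ = ‖F m t k‖ * ‖H k t‖ := norm_mul _ _
          _ = ‖F m t k‖ := by rw [hH1 k t, mul_one]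
          _ ≤ ‖F m t‖ := h1
          _ ≤ R := hgnorm _
      · filter_upwards with t
        exact ((continuous_apply k).continuousAt.tendsto.comp (hFlim t)).mul tendsto_const_nhds
    have hbound : ∀ m, ‖T (F m)‖ ≤ ‖T‖ * R := by
      intro m
      refine (T.le_opNorm _).trans (mul_le_mul_of_nonneg_left ?_ (norm_nonneg T))
      exact (ContinuousMap.norm_le _ hR0.le).mpr (fun t => hgnorm _)
    exact le_of_tendsto' hTlim.norm (fun m => hbound m)
  -- let ε → 0
  refine le_of_forall_pos_le_add (fun ε hε => ?_)
  have hε' : 0 < ε / (‖T‖ + 1) := by positivity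
  refine (key _ hε').trans ?_
  have h1 : ‖T‖ * (ε / (‖T‖ + 1)) ≤ ε := by
    rw [mul_div_assoc']
    rw [div_le_iff₀ (by positivity)]
    nlinarith [norm_nonneg T, hε.le]
  nlinarith [norm_nonneg T, hM0]
end

section
/- Suppose v : J → ℂⁿ (J ⊂ ℝ an interval) is a pointwise limit of a uniformly bounded sequence of continuous maps, and λ ∈ C(I,ℂⁿ)*. Then for each t in any subinterval J₀ with [t-h,t] ⊂ J, the segment v_t (defined by v_t(s)=v(t+s), s ∈ [-h,0]) lies in B_{nA}, and the map t ↦ λ_e v_t on J₀ is itself the pointwise limit of a uniformly bounded sequence of continuous functions J₀ → ℂ. -/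
open MeasureTheory Filter Topology

/-!
Restricting the approximating continuous maps of `v` to the segment gives the first claim. For the
second, the approximants `(t, s) ↦ f_m (t + s)` are jointly continuous and uniformly bounded, so
against the finite measures `ν k` and the bounded densities `H k` their integrals are continuous in
`t` (dominated continuity) and converge pointwise to `λ_e v_t` (dominated convergence).
-/

namespace PropA

variable {X Y E : Type*} [TopologicalSpace X] [TopologicalSpace Y] [NormedAddCommGroup E]

theorem comp_continuous {φ : X → E} (hφ : PropA φ) {g : Y → X} (hg : Continuous g) :
    PropA (φ ∘ g) := by
  obtain ⟨f, hfc, ⟨C, hC⟩, hlim⟩ := hφ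
  exact ⟨fun m => f m ∘ g, fun m => (hfc m).comp hg, ⟨C, fun m y => hC m (g y)⟩,
    fun y => hlim (g y)⟩

theorem apply {ι : Type*} [Fintype ι] {F : ι → Type*} [∀ i, NormedAddCommGroup (F i)]
    {φ : X → ∀ i, F i} (hφ : PropA φ) (i : ι) : PropA fun x => φ x i := by
  obtain ⟨f, hfc, ⟨C, hC⟩, hlim⟩ := hφ
  exact ⟨fun m x => f m x i, fun m => (continuous_apply i).comp (hfc m),
    ⟨C, fun m x => (norm_le_pi_norm _ i).trans (hC m x)⟩,
    fun x => ((continuous_apply i).tendsto _).comp (hlim x)⟩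

theorem zero : PropA fun _ : X => (0 : E) :=
  ⟨fun _ _ => 0, fun _ => continuous_const, ⟨0, fun _ _ => norm_zero.le⟩,
    fun _ => tendsto_const_nhds⟩

theorem add {φ ψ : X → E} (hφ : PropA φ) (hψ : PropA ψ) : PropA (φ + ψ) := by
  obtain ⟨f, hfc, ⟨C, hC⟩, hflim⟩ := hφ
  obtain ⟨g, hgc, ⟨D, hD⟩, hglim⟩ := hψ
  exact ⟨fun m => f m + g m, fun m => (hfc m).add (hgc m),
    ⟨C + D, fun m x => (norm_add_le _ _).trans (add_le_add (hC m x) (hD m x))⟩,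
    fun x => (hflim x).add (hglim x)⟩

theorem finset_sum {ι : Type*} (s : Finset ι) {φ : ι → X → E}
    (hφ : ∀ i ∈ s, PropA (φ i)) :
    PropA fun x => ∑ i ∈ s, φ i x := by
  classical
  induction s using Finset.induction_on with
  | empty => simpa using zero
  | insert i s hi ih =>
    simp_rw [Finset.sum_insert hi]
    exact (hφ i (s.mem_insert_self i)).add
      (ih fun j hj => hφ j (Finset.mem_insert_of_mem hj))

theorem integral_mul {𝕜 : Type*} [RCLike 𝕜] [FirstCountableTopology X] [MeasurableSpace Y]
    [OpensMeasurableSpace Y] {Φ : X × Y → 𝕜} (hΦ : PropA Φ) (μ : Measure Y)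
    [IsFiniteMeasure μ] {g : Y → 𝕜} (hg : AEStronglyMeasurable g μ) {B : ℝ}
    (hgB : ∀ y, ‖g y‖ ≤ B) :
    PropA fun x => ∫ y, Φ (x, y) * g y ∂μ := by
  obtain ⟨f, hfc, ⟨C, hC⟩, hlim⟩ := hΦ
  have hbound : ∀ m x y, ‖f m (x, y) * g y‖ ≤ C * B := fun m x y =>
    (norm_mul_le _ _).trans
      (mul_le_mul (hC m _) (hgB y) (norm_nonneg _) ((norm_nonneg _).trans (hC m (x, y))))
  have hmeas : ∀ m x, AEStronglyMeasurable (fun y => f m (x, y) * g y) μ := fun m x =>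
    ((hfc m).comp (Continuous.prodMk_right x)).aestronglyMeasurable.mul hg
  refine ⟨fun m x => ∫ y, f m (x, y) * g y ∂μ, fun m => ?_,
    ⟨C * B * μ.real Set.univ, fun m x => ?_⟩, fun x => ?_⟩
  · exact continuous_of_dominated (hmeas m) (fun x => ae_of_all _ (hbound m x))
      (integrable_const _)
      (ae_of_all _ fun y => ((hfc m).comp (Continuous.prodMk_left y)).mul continuous_const)
  · exact norm_integral_le_of_norm_le_const (ae_of_all _ (hbound m x))
  · exact tendsto_integral_of_dominated_convergence _ (fun m => hmeas m x) (integrable_const _)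
      (fun m => ae_of_all _ (hbound m x))
      (ae_of_all _ fun y => (hlim (x, y)).mul tendsto_const_nhds)

end PropA

theorem stmt_5_general (n : ℕ) (h : ℝ)
    (J J₀ : Set ℝ)
    (hJJ : ∀ t ∈ J₀, Set.Icc (t - h) t ⊆ J)
    (v : ℝ → Fin n → ℂ) (hv : PropA fun x : J => v x)
    (ν : Fin n → Measure (Set.Icc (-h) (0:ℝ))) (hν : ∀ k, IsFiniteMeasure (ν k))
    (H : Fin n → Set.Icc (-h) (0:ℝ) → ℂ)
    (hHm : ∀ k, Measurable (H k)) (hH1 : ∀ k t, ‖H k t‖ = 1) :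
    (∀ t ∈ J₀, PropA fun s : Set.Icc (-h) (0:ℝ) => v (t + ↑s)) ∧
      PropA fun t : J₀ => ∑ k : Fin n, ∫ s, v (↑t + ↑s) k * H k s ∂(ν k) := by
  have hmem : ∀ t ∈ J₀, ∀ s : Set.Icc (-h) (0:ℝ), t + ↑s ∈ J := fun t ht s =>
    hJJ t ht ⟨by linarith [s.2.1], by linarith [s.2.2]⟩
  refine ⟨fun t ht => hv.comp_continuous
      (g := fun s : Set.Icc (-h) (0:ℝ) => (⟨t + s, hmem t ht s⟩ : J)) (by fun_prop),
    PropA.finset_sum _ fun k _ => ?_⟩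
  have hjoint : PropA fun p : J₀ × Set.Icc (-h) (0:ℝ) => v (p.1 + p.2) k :=
    (hv.comp_continuous (by fun_prop) (g := fun p : J₀ × Set.Icc (-h) (0:ℝ) =>
      (⟨p.1 + p.2, hmem p.1 p.1.2 p.2⟩ : J))).apply k
  have := hν k
  exact hjoint.integral_mul (ν k) (hHm k).aestronglyMeasurable fun s => (hH1 k s).le

/-- If `v : J → ℂⁿ` has property (A) and `λ ∈ C(I,ℂⁿ)*` (with its
extension `λ_e` given by componentwise integration against the Riesz
representation measures), then for each `t ∈ J₀` (where `[t-h,t] ⊆ J`) the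
segment `v_t` lies in `B_{nA}`, and `t ↦ λ_e v_t` has property (A) on `J₀`. -/
theorem stmt_5 (n : ℕ) (h : ℝ) (hh : 0 < h)
    (J J₀ : Set ℝ) (hJ : J.OrdConnected) (hJ₀ : J₀.OrdConnected)
    (hJJ : ∀ t ∈ J₀, Set.Icc (t - h) t ⊆ J)
    (v : ℝ → Fin n → ℂ) (hv : PropA fun x : J => v x)
    (T : C(Set.Icc (-h) (0:ℝ), Fin n → ℂ) →L[ℂ] ℂ)
    (ν : Fin n → Measure (Set.Icc (-h) (0:ℝ))) (hν : ∀ k, IsFiniteMeasure (ν k))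
    (H : Fin n → Set.Icc (-h) (0:ℝ) → ℂ)
    (hHm : ∀ k, Measurable (H k)) (hH1 : ∀ k t, ‖H k t‖ = 1)
    (hrep : ∀ f : C(Set.Icc (-h) (0:ℝ), Fin n → ℂ),
      T f = ∑ k : Fin n, ∫ t, f t k * H k t ∂(ν k)) :
    (∀ t ∈ J₀, PropA fun s : Set.Icc (-h) (0:ℝ) => v (t + ↑s)) ∧
      PropA fun t : J₀ => ∑ k : Fin n, ∫ s, v (↑t + ↑s) k * H k s ∂(ν k) :=
  stmt_5_general n h J J₀ hJJ v hv ν hν H hHm hH1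
end

section
/- Let f : J → ℂⁿ have property (A) on an interval J, let Λ : C(I,ℂⁿ) → Y be continuous linear, and let a < b lie in a subinterval J₀ such that [t-h,t] ⊂ J for all t ∈ J₀. Then the weak-star integral ∫_{(a,b)} Λ_E f_t dm(t) exists, belongs to Y**, and satisfies |∫_{(a,b)} Λ_E f_t dm(t)| ≤ (b-a) ‖Λ‖ sup_{a-h<t<b} |f(t)|. -/
/-!
For `t ∈ (a, b)` the segment `f_t` is the bounded pointwise limit of the continuous segments of
the approximants of `f`, truncated radially at `M = sup_{a-h<t<b} |f t|`. Hence `y ↦ Λ_E f_t y`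
is a limit of the functionals `y ↦ y (Λ (g_m)_t)`, so it is linear of norm at most `‖Λ‖ M`,
and `t ↦ Λ_E f_t y` is measurable as a pointwise limit of continuous functions. Integrating the
bound `‖Λ‖ M ‖y‖` over `(a, b)` gives a functional on `Y*` of norm at most `(b - a) ‖Λ‖ M`.
-/

open MeasureTheory Filter Topology

open Set

lemma exists_continuous_retraction_closedBall_zero {E : Type*} [NormedAddCommGroup E]
    [NormedSpace ℝ E] {M : ℝ} (hM : 0 ≤ M) :
    ∃ ρ : E → E, Continuous ρ ∧ (∀ v, ‖ρ v‖ ≤ M) ∧ ∀ v, ‖v‖ ≤ M → ρ v = v := by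
  rcases hM.eq_or_lt with rfl | hM
  · exact ⟨fun _ => 0, continuous_const, fun _ => by simp, fun v hv => by
      simpa using (norm_le_zero_iff.1 hv).symm⟩
  have hmax : ∀ v : E, 0 < max M ‖v‖ := fun v => lt_max_of_lt_left hM
  refine ⟨fun v => (M / max M ‖v‖) • v, ?_, fun v => ?_, fun v hv => ?_⟩
  · exact (continuous_const.div (continuous_const.max continuous_norm)
      fun v => (hmax v).ne').smul continuous_id
  · rw [norm_smul, Real.norm_of_nonneg (div_nonneg hM.le (hmax v).le), div_mul_eq_mul_div,
      div_le_iff₀ (hmax v)]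
    exact mul_le_mul_of_nonneg_left (le_max_right _ _) hM.le
  · simp only [max_eq_left hv, div_self hM.ne', one_smul]

namespace PropA

variable {X E : Type*} [TopologicalSpace X] [NormedAddCommGroup E] {φ : X → E}

lemma exists_norm_le (hφ : PropA φ) : ∃ C, ∀ x, ‖φ x‖ ≤ C := by
  obtain ⟨g, -, ⟨C, hC⟩, hlim⟩ := hφ
  exact ⟨C, fun x => le_of_tendsto (hlim x).norm (Eventually.of_forall fun m => hC m x)⟩

lemma exists_approx_norm_le [NormedSpace ℝ E] (hφ : PropA φ) {M : ℝ} (hM : 0 ≤ M) :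
    ∃ g : ℕ → X → E, (∀ m, Continuous (g m)) ∧ (∀ m x, ‖g m x‖ ≤ M) ∧
      ∀ x, ‖φ x‖ ≤ M → Tendsto (fun m => g m x) atTop (𝓝 (φ x)) := by
  obtain ⟨g, hg, -, hlim⟩ := hφ
  obtain ⟨ρ, hρ, hρM, hρφ⟩ := exists_continuous_retraction_closedBall_zero (E := E) hM
  refine ⟨fun m => ρ ∘ g m, fun m => hρ.comp (hg m), fun m x => hρM _, fun x hx => ?_⟩
  have hρlim := (hρ.tendsto _).comp (hlim x)
  rwa [hρφ _ hx] at hρlim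

lemma exists_segment_approx [NormedSpace ℝ E] {J : Set ℝ} {f : ℝ → E}
    (hf : PropA fun x : J => f x) {a b h M : ℝ} (hab : a ≤ b)
    (hwin : ∀ t ∈ Icc a b, Icc (t - h) t ⊆ J) (hM : 0 ≤ M) :
    ∃ W : ℕ → C(ℝ, C(Icc (-h) (0:ℝ), E)), (∀ m t s, ‖W m t s‖ ≤ M) ∧
      ∀ t ∈ Icc a b, ∀ s : Icc (-h) (0:ℝ), ‖f (t + s)‖ ≤ M →
        Tendsto (fun m => W m t s) atTop (𝓝 (f (t + s))) := by
  obtain ⟨g, hg, hgM, hlim⟩ := hf.exists_approx_norm_le hM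
  have hmem : ∀ (t : Icc a b) (s : Icc (-h) (0:ℝ)), (t + s : ℝ) ∈ J := fun t s =>
    hwin t t.2 ⟨by linarith [s.2.1], by linarith [s.2.2]⟩
  let P : C(ℝ × Icc (-h) (0:ℝ), J) :=
    ⟨fun p => ⟨projIcc a b hab p.1 + p.2, hmem _ _⟩, by fun_prop⟩
  refine ⟨fun m => (ContinuousMap.comp ⟨g m, hg m⟩ P).curry, fun m t s => hgM _ _,
    fun t ht s hs => ?_⟩
  have hP : P (t, s) = ⟨t + s, hmem ⟨t, ht⟩ s⟩ :=
    Subtype.ext (by simp [P, projIcc_of_mem hab ht])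
  simpa [hP] using hlim ⟨t + s, _⟩ hs

end PropA

lemma Icc_sub_subset_of_segments_subset {J : Set ℝ} {a b h : ℝ} (hab : a ≤ b) (hh : 0 ≤ h)
    (hwin : ∀ t ∈ Icc a b, Icc (t - h) t ⊆ J) : Icc (a - h) b ⊆ J := by
  intro x hx
  rcases le_or_gt x a with hxa | hax
  · exact hwin a ⟨le_rfl, hab⟩ ⟨hx.1, hxa⟩
  · exact hwin x ⟨hax.le, hx.2⟩ ⟨by linarith, le_rfl⟩

/-- `TE φ y` models `(Λ_E φ) y = (y ∘ Λ)_e φ`. -/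
def IsCanonicalExtension {𝕜 X E Y : Type*} [RCLike 𝕜] [TopologicalSpace X]
    [NormedAddCommGroup E] [NormedSpace 𝕜 E] [NormedAddCommGroup Y] [NormedSpace 𝕜 Y]
    (T : C(X, E) →L[𝕜] Y) (TE : (X → E) → (Y →L[𝕜] 𝕜) → 𝕜) : Prop :=
  ∀ (φ : X → E) (φm : ℕ → C(X, E)), (∃ C : ℝ, ∀ m s, ‖φm m s‖ ≤ C) →
    (∀ s, Tendsto (fun m => φm m s) atTop (𝓝 (φ s))) →
    ∀ y : Y →L[𝕜] 𝕜, Tendsto (fun m => y (T (φm m))) atTop (𝓝 (TE φ y))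

namespace IsCanonicalExtension

variable {𝕜 X E Y : Type*} [RCLike 𝕜] [TopologicalSpace X]
  [NormedAddCommGroup E] [NormedSpace 𝕜 E] [NormedAddCommGroup Y] [NormedSpace 𝕜 Y]
  {T : C(X, E) →L[𝕜] Y} {TE : (X → E) → (Y →L[𝕜] 𝕜) → 𝕜} {M : ℝ}

lemma exists_clm_eq [CompactSpace X] (hTE : IsCanonicalExtension T TE) {φ : X → E}
    {φm : ℕ → C(X, E)} (hM : 0 ≤ M) (hbd : ∀ m s, ‖φm m s‖ ≤ M)
    (hlim : ∀ s, Tendsto (fun m => φm m s) atTop (𝓝 (φ s))) :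
    ∃ Φ : (Y →L[𝕜] 𝕜) →L[𝕜] 𝕜, ‖Φ‖ ≤ ‖T‖ * M ∧ ⇑Φ = TE φ := by
  have hTEφ := hTE φ φm ⟨M, hbd⟩ hlim
  let L : (Y →L[𝕜] 𝕜) →ₗ[𝕜] 𝕜 :=
    { toFun := TE φ
      map_add' := fun y₁ y₂ => tendsto_nhds_unique (hTEφ (y₁ + y₂)) <| by
        simpa using (hTEφ y₁).add (hTEφ y₂)
      map_smul' := fun c y => tendsto_nhds_unique (hTEφ (c • y)) <| by
        simpa using (hTEφ y).const_mul c }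
  have hL : ∀ y, ‖L y‖ ≤ ‖T‖ * M * ‖y‖ := fun y => by
    refine le_of_tendsto (hTEφ y).norm (Eventually.of_forall fun m => ?_)
    calc ‖y (T (φm m))‖ ≤ ‖y‖ * (‖T‖ * ‖φm m‖) :=
          (y.le_opNorm _).trans (mul_le_mul_of_nonneg_left (T.le_opNorm _) (norm_nonneg y))
      _ ≤ ‖y‖ * (‖T‖ * M) := by
          gcongr
          exact (ContinuousMap.norm_le _ hM).2 (hbd m)
      _ = ‖T‖ * M * ‖y‖ := mul_comm _ _
  exact ⟨L.mkContinuous _ hL, L.mkContinuous_norm_le (by positivity) hL, rfl⟩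

lemma aestronglyMeasurable {α : Type*} [TopologicalSpace α] [MeasurableSpace α]
    [OpensMeasurableSpace α] {μ : Measure α} (hTE : IsCanonicalExtension T TE)
    {φ : α → X → E} {W : ℕ → C(α, C(X, E))} (hbd : ∀ m t s, ‖W m t s‖ ≤ M)
    (hlim : ∀ᵐ t ∂μ, ∀ s, Tendsto (fun m => W m t s) atTop (𝓝 (φ t s))) (y : Y →L[𝕜] 𝕜) :
    AEStronglyMeasurable (fun t => TE (φ t) y) μ :=
  aestronglyMeasurable_of_tendsto_ae atTop
    (fun m => (y.continuous.comp (T.continuous.comp (W m).continuous)).aestronglyMeasurable)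
    (hlim.mono fun t ht => hTE (φ t) (fun m => W m t) ⟨M, fun m => hbd m t⟩ ht y)

end IsCanonicalExtension

theorem exists_clm_eq_integral {α 𝕜 V : Type*} [MeasurableSpace α] {μ : Measure α}
    [IsFiniteMeasure μ] [RCLike 𝕜] [NormedAddCommGroup V] [NormedSpace 𝕜 V]
    {g : α → V → 𝕜} {K : ℝ} (hK : 0 ≤ K) (hmeas : ∀ y, AEStronglyMeasurable (g · y) μ)
    (hg : ∀ᵐ t ∂μ, ∃ Φ : V →L[𝕜] 𝕜, ‖Φ‖ ≤ K ∧ ⇑Φ = g t) :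
    (∀ y, Integrable (g · y) μ) ∧
      ∃ F : V →L[𝕜] 𝕜, (∀ y, F y = ∫ t, g t y ∂μ) ∧ ‖F‖ ≤ μ.real univ * K := by
  have hbound : ∀ y, ∀ᵐ t ∂μ, ‖g t y‖ ≤ K * ‖y‖ := fun y =>
    hg.mono fun t ⟨Φ, hΦ, hΦg⟩ => hΦg ▸ Φ.le_of_opNorm_le hΦ y
  have hint : ∀ y, Integrable (g · y) μ := fun y => Integrable.of_bound (hmeas y) _ (hbound y)
  let L : V →ₗ[𝕜] 𝕜 :=
    { toFun := fun y => ∫ t, g t y ∂μ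
      map_add' := fun y₁ y₂ => by
        rw [← integral_add (hint y₁) (hint y₂)]
        exact integral_congr_ae (hg.mono fun t ⟨Φ, _, hΦg⟩ => by simp only [← hΦg, map_add])
      map_smul' := fun c y => by
        rw [RingHom.id_apply, smul_eq_mul, ← integral_const_mul]
        exact integral_congr_ae
          (hg.mono fun t ⟨Φ, _, hΦg⟩ => by simp only [← hΦg, map_smul, smul_eq_mul]) }
  have hL : ∀ y, ‖L y‖ ≤ μ.real univ * K * ‖y‖ := fun y =>
    (norm_integral_le_of_norm_le_const (hbound y)).trans_eq (by ring)
  exact ⟨hint, L.mkContinuous _ hL, fun y => rfl, L.mkContinuous_norm_le (by positivity) hL⟩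

theorem stmt_10_general (n : ℕ) (h : ℝ) (hh : 0 < h)
    (Y : Type*) [NormedAddCommGroup Y] [NormedSpace ℂ Y]
    (T : C(Set.Icc (-h) (0:ℝ), Fin n → ℂ) →L[ℂ] Y)
    (TE : (Set.Icc (-h) (0:ℝ) → Fin n → ℂ) → (Y →L[ℂ] ℂ) → ℂ)
    (hTE : ∀ (φ : Set.Icc (-h) (0:ℝ) → Fin n → ℂ)
        (fm : ℕ → C(Set.Icc (-h) (0:ℝ), Fin n → ℂ)),
      (∃ C : ℝ, ∀ m s, ‖fm m s‖ ≤ C) →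
      (∀ s, Tendsto (fun m => fm m s) atTop (𝓝 (φ s))) →
      ∀ y : Y →L[ℂ] ℂ, Tendsto (fun m => y (T (fm m))) atTop (𝓝 (TE φ y)))
    (J J₀ : Set ℝ) (hJ₀ : J₀.OrdConnected)
    (hJJ : ∀ t ∈ J₀, Set.Icc (t - h) t ⊆ J)
    (f : ℝ → Fin n → ℂ) (hf : PropA fun x : J => f x)
    (a b : ℝ) (ha : a ∈ J₀) (hb : b ∈ J₀) (hab : a < b) :
    ∃ F : (Y →L[ℂ] ℂ) →L[ℂ] ℂ,
      (∀ y : Y →L[ℂ] ℂ,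
        IntegrableOn (fun t => TE (fun s : Set.Icc (-h) (0:ℝ) => f (t + ↑s)) y)
          (Set.Ioo a b) ∧
        F y = ∫ t in Set.Ioo a b, TE (fun s : Set.Icc (-h) (0:ℝ) => f (t + ↑s)) y) ∧
      ‖F‖ ≤ (b - a) * ‖T‖ * ⨆ t : Set.Ioo (a - h) b, ‖f ↑t‖ := by
  have hTE : IsCanonicalExtension T TE := hTE
  have hwin : ∀ t ∈ Icc a b, Icc (t - h) t ⊆ J := fun t ht => hJJ t (hJ₀.out ha hb ht)
  set M := ⨆ t : Ioo (a - h) b, ‖f ↑t‖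
  have hM : 0 ≤ M := Real.iSup_nonneg fun _ => norm_nonneg _
  have hfM : ∀ x ∈ Ioo (a - h) b, ‖f x‖ ≤ M := by
    obtain ⟨C, hC⟩ := hf.exists_norm_le
    refine fun x hx => le_ciSup (f := fun t : Ioo (a - h) b => ‖f t‖) ⟨C, ?_⟩ ⟨x, hx⟩
    rintro _ ⟨x, rfl⟩
    exact hC ⟨x, Icc_sub_subset_of_segments_subset hab.le hh.le hwin (Ioo_subset_Icc_self x.2)⟩
  obtain ⟨W, hWM, hWlim⟩ := hf.exists_segment_approx hab.le hwin hM
  have hlim : ∀ᵐ t ∂volume.restrict (Ioo a b), ∀ s : Icc (-h) (0:ℝ),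
      Tendsto (fun m => W m t s) atTop (𝓝 (f (t + s))) :=
    (ae_restrict_iff' measurableSet_Ioo).2 <| ae_of_all _ fun t ht s =>
      hWlim t (Ioo_subset_Icc_self ht) s
        (hfM _ ⟨by linarith [ht.1, s.2.1], by linarith [ht.2, s.2.2]⟩)
  obtain ⟨hint, F, hF, hFM⟩ := exists_clm_eq_integral (by positivity)
    (hTE.aestronglyMeasurable hWM hlim) (hlim.mono fun t ht => hTE.exists_clm_eq hM (hWM · t) ht)
  refine ⟨F, fun y => ⟨hint y, hF y⟩, ?_⟩
  simpa [Real.volume_real_Ioo_of_le hab.le, mul_assoc] using hFM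

/-- If `f : J → ℂⁿ` has property (A), `Λ : C(I,ℂⁿ) → Y` is
continuous linear (with canonical extension `Λ_E` to `B_{nA}`, characterized by
bounded pointwise approximation), and `a < b` lie in a subinterval `J₀` with
`[t-h,t] ⊆ J` for all `t ∈ J₀`, then the weak-star integral
`∫_{(a,b)} Λ_E f_t dm(t)` exists, belongs to `Y**`, and
`‖∫_{(a,b)} Λ_E f_t dm(t)‖ ≤ (b-a)·‖Λ‖·sup_{a-h<t<b}‖f t‖`. -/
theorem stmt_10 (n : ℕ) (h : ℝ) (hh : 0 < h)
    (Y : Type*) [NormedAddCommGroup Y] [NormedSpace ℂ Y]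
    (T : C(Set.Icc (-h) (0:ℝ), Fin n → ℂ) →L[ℂ] Y)
    (TE : (Set.Icc (-h) (0:ℝ) → Fin n → ℂ) → (Y →L[ℂ] ℂ) → ℂ)
    (hTE : ∀ (φ : Set.Icc (-h) (0:ℝ) → Fin n → ℂ)
        (fm : ℕ → C(Set.Icc (-h) (0:ℝ), Fin n → ℂ)),
      (∃ C : ℝ, ∀ m s, ‖fm m s‖ ≤ C) →
      (∀ s, Tendsto (fun m => fm m s) atTop (𝓝 (φ s))) →
      ∀ y : Y →L[ℂ] ℂ, Tendsto (fun m => y (T (fm m))) atTop (𝓝 (TE φ y)))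
    (J J₀ : Set ℝ) (hJ : J.OrdConnected) (hJ₀ : J₀.OrdConnected)
    (hJJ : ∀ t ∈ J₀, Set.Icc (t - h) t ⊆ J)
    (f : ℝ → Fin n → ℂ) (hf : PropA fun x : J => f x)
    (a b : ℝ) (ha : a ∈ J₀) (hb : b ∈ J₀) (hab : a < b) :
    ∃ F : (Y →L[ℂ] ℂ) →L[ℂ] ℂ,
      (∀ y : Y →L[ℂ] ℂ,
        IntegrableOn (fun t => TE (fun s : Set.Icc (-h) (0:ℝ) => f (t + ↑s)) y)
          (Set.Ioo a b) ∧
        F y = ∫ t in Set.Ioo a b, TE (fun s : Set.Icc (-h) (0:ℝ) => f (t + ↑s)) y) ∧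
      ‖F‖ ≤ (b - a) * ‖T‖ * ⨆ t : Set.Ioo (a - h) b, ‖f ↑t‖ :=
  stmt_10_general n h hh Y T TE hTE J J₀ hJ₀ hJJ f hf a b ha hb hab
end

section
/- With a < b, f : [a-h,b] → ℂⁿ having property (A) and vanishing on [a-h,a), q : [a,b] → ℂ continuous, g the convolution g(t)=∫_{(a,t)} q(s) f(t-s+a) dm(s) (g=0 on [a-h,a]), and λ ∈ C(I,ℂⁿ)*: for all t ∈ (a,b], λ applied to the segment g_t equals ∫_{(a,t)} λ_e(q(s) f_{t-s+a}) dm(s). -/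
open MeasureTheory Filter Topology

/-- With `f : [a-h,b] → ℂⁿ` having property (A) and vanishing on
`[a-h,a)`, `q : [a,b] → ℂ` continuous, `g(t) = ∫_{(a,t)} q(s) f(t-s+a) dm(s)`
(and `g = 0` on `[a-h,a]`), and `λ ∈ C(I,ℂⁿ)*` (represented via measures
`dμ_k = H_k dν_k`, extension `λ_e` by componentwise integration): for all
`t ∈ (a,b]`, `λ(g_t) = ∫_{(a,t)} λ_e(q(s) f_{t-s+a}) dm(s)`.  Here `G` is the
segment `g_t` of `g` at `t` as a continuous map. -/
theorem stmt_12 (n : ℕ) (h : ℝ) (hh : 0 < h) (a b : ℝ) (hab : a < b)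
    (f : ℝ → Fin n → ℂ) (hfA : PropA fun x : Set.Icc (a - h) b => f ↑x)
    (hf0 : ∀ r ∈ Set.Ico (a - h) a, f r = 0)
    (q : ℝ → ℂ) (hq : ContinuousOn q (Set.Icc a b))
    (T : C(Set.Icc (-h) (0:ℝ), Fin n → ℂ) →L[ℂ] ℂ)
    (ν : Fin n → Measure (Set.Icc (-h) (0:ℝ))) (hν : ∀ k, IsFiniteMeasure (ν k))
    (H : Fin n → Set.Icc (-h) (0:ℝ) → ℂ)
    (hHm : ∀ k, Measurable (H k)) (hH1 : ∀ k t, ‖H k t‖ = 1)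
    (hrep : ∀ g : C(Set.Icc (-h) (0:ℝ), Fin n → ℂ),
      T g = ∑ k : Fin n, ∫ u, g u k * H k u ∂(ν k))
    (t : ℝ) (ht : t ∈ Set.Ioc a b)
    (G : C(Set.Icc (-h) (0:ℝ), Fin n → ℂ))
    (hG : ∀ s : Set.Icc (-h) (0:ℝ),
      G s = if a < t + ↑s then (∫ u in Set.Ioo a (t + ↑s), q u • f (t + ↑s - u + a))
            else 0) :
    T G = ∫ s in Set.Ioo a t,
      ∑ k : Fin n, ∫ u, (q s * f (t - s + a + ↑u) k) * H k u ∂(ν k) := by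
  obtain ⟨hta, htb⟩ := ht
  haveI := hν
  obtain ⟨fs, hfsc, ⟨C, hC⟩, hflim⟩ := hfA
  -- The subtype restriction of f is strongly measurable (pointwise limit of continuous maps).
  have hsub : StronglyMeasurable (fun x : Set.Icc (a - h) b => f ↑x) :=
    stronglyMeasurable_of_tendsto atTop (fun m => (hfsc m).stronglyMeasurable)
      (tendsto_pi_nhds.2 hflim)
  have hinj : Function.Injective (fun x : Set.Icc (a - h) b => (x : ℝ)) :=
    Subtype.coe_injective
  have hinjq : Function.Injective (fun x : Set.Icc a b => (x : ℝ)) :=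
    Subtype.coe_injective
  -- Measurable global extensions of f and q.
  set F : ℝ → Fin n → ℂ :=
    Function.extend (fun x : Set.Icc (a - h) b => (x : ℝ)) (fun x => f ↑x) 0 with hFdef
  set q' : ℝ → ℂ :=
    Function.extend (fun x : Set.Icc a b => (x : ℝ)) (fun x => q ↑x) 0 with hqdef
  have hFm : Measurable F :=
    (MeasurableEmbedding.subtype_coe measurableSet_Icc).measurable_extend
      hsub.measurable measurable_const
  have hqm : Measurable q' :=
    (MeasurableEmbedding.subtype_coe measurableSet_Icc).measurable_extend
      hq.restrict.measurable measurable_const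
  have hFeq : ∀ x, x ∈ Set.Icc (a - h) b → F x = f x := fun x hx =>
    hinj.extend_apply (fun x : Set.Icc (a - h) b => f ↑x) 0 ⟨x, hx⟩
  have hqeq : ∀ x, x ∈ Set.Icc a b → q' x = q x := fun x hx =>
    hinjq.extend_apply (fun x : Set.Icc a b => q ↑x) 0 ⟨x, hx⟩
  have hFnot : ∀ x, x ∉ Set.Icc (a - h) b → F x = 0 := by
    intro x hx
    rw [hFdef, Function.extend_apply']
    · rfl
    · rintro ⟨y, rfl⟩; exact hx y.2
  have hqnot : ∀ x, x ∉ Set.Icc a b → q' x = 0 := by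
    intro x hx
    rw [hqdef, Function.extend_apply']
    · rfl
    · rintro ⟨y, rfl⟩; exact hx y.2
  -- global bounds
  set C0 : ℝ := max C 0 with hC0def
  have hFbound : ∀ x, ‖F x‖ ≤ C0 := by
    intro x
    by_cases hx : x ∈ Set.Icc (a - h) b
    · rw [hFeq x hx]
      have hlim : Tendsto (fun m => ‖fs m ⟨x, hx⟩‖) atTop (𝓝 ‖f x‖) :=
        (hflim ⟨x, hx⟩).norm
      exact le_trans (le_of_tendsto hlim (Eventually.of_forall fun m => hC m _))
        (le_max_left _ _)
    · rw [hFnot x hx]; simp [hC0def]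
  obtain ⟨Q, hQ⟩ := isCompact_Icc.exists_bound_of_continuousOn hq
  set Q0 : ℝ := max Q 0 with hQ0def
  have hqbound : ∀ x, ‖q' x‖ ≤ Q0 := by
    intro x
    by_cases hx : x ∈ Set.Icc a b
    · rw [hqeq x hx]; exact le_trans (hQ x hx) (le_max_left _ _)
    · rw [hqnot x hx]; simp [hQ0def]
  have hF0 : ∀ r ∈ Set.Ico (a - h) a, F r = 0 := by
    intro r hr
    rw [hFeq r ⟨hr.1, le_trans hr.2.le (le_of_lt (lt_of_lt_of_le hta htb))⟩]
    exact hf0 r hr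
  -- finiteness of the restricted Lebesgue measure
  haveI hfin : IsFiniteMeasure (volume.restrict (Set.Ioo a t)) := by
    constructor
    rw [Measure.restrict_apply_univ, Real.volume_Ioo]
    exact ENNReal.ofReal_lt_top
  -- the segment identity: G u is a convolution integral over the full interval (a,t)
  have hGeq : ∀ u : Set.Icc (-h) (0:ℝ),
      G u = ∫ s in Set.Ioo a t, q' s • F (t - s + a + ↑u) := by
    intro u
    have hu1 : -h ≤ (u : ℝ) := u.2.1
    have hu2 : (u : ℝ) ≤ 0 := u.2.2
    rw [hG u]
    by_cases hau : a < t + ↑u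
    · rw [if_pos hau]
      have h1 : (∫ s in Set.Ioo a (t + ↑u), q s • f (t + ↑u - s + a)) =
          ∫ s in Set.Ioo a (t + ↑u), q' s • F (t - s + a + ↑u) := by
        apply setIntegral_congr_fun measurableSet_Ioo
        intro s hs
        have hs1 := hs.1
        have hs2 := hs.2
        have harg : (t + ↑u - s + a) ∈ Set.Icc (a - h) b :=
          ⟨by linarith, by linarith⟩
        have hsq : s ∈ Set.Icc a b := ⟨hs1.le, by linarith⟩
        simp only []
        rw [hqeq s hsq, show t - s + a + (u : ℝ) = t + ↑u - s + a by ring,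
          hFeq _ harg]
      rw [h1, ← integral_indicator measurableSet_Ioo,
        ← integral_indicator measurableSet_Ioo]
      apply integral_congr_ae
      have hne : ∀ᵐ s : ℝ, s ≠ t + ↑u := by
        rw [ae_iff]
        simp only [not_not, Set.setOf_eq_eq_singleton]
        exact measure_singleton _
      filter_upwards [hne] with s hsne
      by_cases h2 : s ∈ Set.Ioo a (t + ↑u)
      · rw [Set.indicator_of_mem h2,
          Set.indicator_of_mem (show s ∈ Set.Ioo a t from ⟨h2.1, by linarith [h2.2]⟩)]
      · rw [Set.indicator_of_notMem h2]
        by_cases h3 : s ∈ Set.Ioo a t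
        · rw [Set.indicator_of_mem h3]
          have hsgt : t + ↑u < s := by
            rcases lt_or_ge (t + ↑u) s with h4 | h4
            · exact h4
            · exact absurd ⟨h3.1, lt_of_le_of_ne h4 hsne⟩ h2
          have hz : F (t - s + a + ↑u) = 0 :=
            hF0 _ ⟨by linarith [h3.2], by linarith⟩
          rw [hz, smul_zero]
        · rw [Set.indicator_of_notMem h3]
    · rw [if_neg hau]
      symm
      rw [setIntegral_congr_fun measurableSet_Ioo
        (g := fun _ : ℝ => (0 : Fin n → ℂ)) ?_, integral_zero]
      intro s hs
      have h2 : t + ↑u ≤ a := not_lt.1 hau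
      have hz : F (t - s + a + ↑u) = 0 :=
        hF0 _ ⟨by linarith [hs.2], by linarith [hs.1]⟩
      simp only [hz, smul_zero]
  -- integrability of the slices
  have hslice : ∀ u : Set.Icc (-h) (0:ℝ),
      Integrable (fun s => q' s • F (t - s + a + ↑u))
        (volume.restrict (Set.Ioo a t)) := by
    intro u
    have hmeas : Measurable fun s : ℝ => q' s • F (t - s + a + ↑u) := by
      apply measurable_pi_lambda
      intro k
      simp only [Pi.smul_apply, smul_eq_mul]
      exact hqm.mul ((measurable_pi_apply k).comp
        (hFm.comp (((measurable_const.sub measurable_id).add_const a).add_const _)))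
    refine ⟨hmeas.aestronglyMeasurable, ?_⟩
    apply HasFiniteIntegral.of_bounded (C := Q0 * C0)
    apply Eventually.of_forall
    intro s
    rw [norm_smul]
    exact mul_le_mul (hqbound s) (hFbound _) (norm_nonneg _) (le_max_right Q 0)
  -- Fubini integrability
  have hFub : ∀ k : Fin n, Integrable
      (Function.uncurry fun (u : Set.Icc (-h) (0:ℝ)) (s : ℝ) =>
        (q' s * F (t - s + a + ↑u) k) * H k u)
      ((ν k).prod (volume.restrict (Set.Ioo a t))) := by
    intro k
    have hmap : Measurable fun z : Set.Icc (-h) (0:ℝ) × ℝ => t - z.2 + a + ↑z.1 :=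
      ((measurable_const.sub measurable_snd).add_const a).add
        (measurable_subtype_coe.comp measurable_fst)
    have hm : Measurable (Function.uncurry fun (u : Set.Icc (-h) (0:ℝ)) (s : ℝ) =>
        (q' s * F (t - s + a + ↑u) k) * H k u) := by
      apply Measurable.mul
      · exact (hqm.comp measurable_snd).mul
          ((measurable_pi_apply k).comp (hFm.comp hmap))
      · exact (hHm k).comp measurable_fst
    refine ⟨hm.aestronglyMeasurable, ?_⟩
    apply HasFiniteIntegral.of_bounded (C := Q0 * C0 * 1)
    apply Eventually.of_forall
    rintro ⟨u, s⟩
    simp only [Function.uncurry]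
    rw [norm_mul, norm_mul, hH1 k u]
    apply mul_le_mul _ le_rfl zero_le_one
      (mul_nonneg (le_max_right Q 0) (le_max_right C 0))
    apply mul_le_mul (hqbound s) _ (norm_nonneg _) (le_max_right Q 0)
    exact le_trans (norm_le_pi_norm _ k) (hFbound _)
  -- the main computation
  rw [hrep]
  have key : ∀ k : Fin n,
      (∫ u, G u k * H k u ∂(ν k))
        = ∫ s in Set.Ioo a t, ∫ u, (q' s * F (t - s + a + ↑u) k) * H k u ∂(ν k) := by
    intro k
    have e1 : (∫ u, G u k * H k u ∂(ν k))
        = ∫ u, (∫ s in Set.Ioo a t, (q' s * F (t - s + a + ↑u) k) * H k u) ∂(ν k) := by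
      apply integral_congr_ae (Eventually.of_forall fun u => ?_)
      have e2 : G u k = ∫ s in Set.Ioo a t, q' s * F (t - s + a + ↑u) k := by
        rw [hGeq u]
        have e3 := ((ContinuousLinearMap.proj k :
          (Fin n → ℂ) →L[ℂ] ℂ).integral_comp_comm (hslice u)).symm
        simpa [ContinuousLinearMap.proj_apply, Pi.smul_apply, smul_eq_mul] using e3
      rw [e2, ← integral_mul_const]
    rw [e1]
    exact integral_integral_swap (hFub k)
  have hint2 : ∀ k : Fin n, Integrable
      (fun s : ℝ => ∫ u, (q' s * F (t - s + a + ↑u) k) * H k u ∂(ν k))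
      (volume.restrict (Set.Ioo a t)) := fun k => (hFub k).integral_prod_right
  rw [Finset.sum_congr rfl fun k _ => key k,
    ← integral_finset_sum _ fun k _ => hint2 k]
  apply setIntegral_congr_fun measurableSet_Ioo
  intro s hs
  apply Finset.sum_congr rfl
  intro k _
  apply integral_congr_ae (Eventually.of_forall fun u => ?_)
  have hsq : s ∈ Set.Icc a b := ⟨hs.1.le, le_trans hs.2.le htb⟩
  have harg : (t - s + a + ↑u) ∈ Set.Icc (a - h) b :=
    ⟨by linarith [hs.2, u.2.1], by linarith [hs.1, u.2.2]⟩
  rw [hqeq s hsq, hFeq _ harg]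
end

section
/- Let a < b and let x : [a-h,b] → ℂⁿ have property (A) with x(t) = 0 for a-h ≤ t ≤ a. Define z(t) = ∫_{(a-h,t)} x dm. Then z is continuous, and for every λ ∈ C(I,ℂⁿ)* and every t ∈ (a,b], λ(z_t) = ∫_{(a,t)} λ_e(x_s) dm(s). -/
set_option maxHeartbeats 1000000


open MeasureTheory Filter Topology

/-- Let `a < b` and let `x : [a-h,b] → ℂⁿ` have property (A) with
`x = 0` on `[a-h,a]`.  Define `z(t) = ∫_{(a-h,t)} x dm`.  Then `z` is
continuous, and for every `λ ∈ C(I,ℂⁿ)*` (represented via measures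
`dμ_k = H_k dν_k`, with extension `λ_e` by componentwise integration) and every
`t ∈ (a,b]`, `λ(z_t) = ∫_{(a,t)} λ_e(x_s) dm(s)`; here `G` denotes the segment
`z_t` as a continuous map. -/
theorem stmt_13 (n : ℕ) (h : ℝ) (hh : 0 < h) (a b : ℝ) (hab : a < b)
    (x : ℝ → Fin n → ℂ) (hxA : PropA fun r : Set.Icc (a - h) b => x ↑r)
    (hx0 : ∀ r ∈ Set.Icc (a - h) a, x r = 0)
    (T : C(Set.Icc (-h) (0:ℝ), Fin n → ℂ) →L[ℂ] ℂ)
    (ν : Fin n → Measure (Set.Icc (-h) (0:ℝ))) (hν : ∀ k, IsFiniteMeasure (ν k))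
    (H : Fin n → Set.Icc (-h) (0:ℝ) → ℂ)
    (hHm : ∀ k, Measurable (H k)) (hH1 : ∀ k t, ‖H k t‖ = 1)
    (hrep : ∀ g : C(Set.Icc (-h) (0:ℝ), Fin n → ℂ),
      T g = ∑ k : Fin n, ∫ u, g u k * H k u ∂(ν k)) :
    ContinuousOn (fun t => ∫ r in Set.Ioo (a - h) t, x r) (Set.Icc (a - h) b) ∧
    ∀ t ∈ Set.Ioc a b, ∀ G : C(Set.Icc (-h) (0:ℝ), Fin n → ℂ),
      (∀ s : Set.Icc (-h) (0:ℝ), G s = ∫ r in Set.Ioo (a - h) (t + ↑s), x r) →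
      T G = ∫ s in Set.Ioo a t,
        ∑ k : Fin n, ∫ u, x (s + ↑u) k * H k u ∂(ν k) := by
  obtain ⟨f, hfc, ⟨C, hC⟩, hlim⟩ := hxA
  have hahb : a - h ≤ b := by linarith
  have haha : a - h ≤ a := by linarith
  obtain ⟨g, hg_def⟩ : ∃ g : ℝ → Fin n → ℂ, g = Set.indicator (Set.Icc (a - h) b) x :=
    ⟨_, rfl⟩
  -- strong measurability of g
  have hg_sm : StronglyMeasurable g := by
    apply stronglyMeasurable_of_tendsto (f := fun m =>
        Set.indicator (Set.Icc (a - h) b) (fun r => f m (Set.projIcc (a - h) b hahb r)))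
        (u := atTop)
    · intro m
      exact (Continuous.stronglyMeasurable ((hfc m).comp continuous_projIcc)).indicator
        measurableSet_Icc
    · rw [tendsto_pi_nhds]
      intro r
      by_cases hr : r ∈ Set.Icc (a - h) b
      · simp only [hg_def, Set.indicator_of_mem hr, Set.projIcc_of_mem hahb hr]
        exact hlim ⟨r, hr⟩
      · simp only [hg_def, Set.indicator_of_notMem hr]
        exact tendsto_const_nhds
  obtain ⟨C', hC'_def⟩ : ∃ C' : ℝ, C' = max C 0 := ⟨_, rfl⟩
  have hgb : ∀ r, ‖g r‖ ≤ C' := by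
    intro r
    by_cases hr : r ∈ Set.Icc (a - h) b
    · rw [hg_def, Set.indicator_of_mem hr, hC'_def]
      refine le_trans ?_ (le_max_left _ _)
      exact le_of_tendsto (hlim ⟨r, hr⟩).norm (Eventually.of_forall fun m => hC m _)
    · rw [hg_def, Set.indicator_of_notMem hr]
      rw [norm_zero, hC'_def]
      exact le_max_right C 0
  have hgx : ∀ r ∈ Set.Icc (a - h) b, g r = x r := fun r hr => by
    rw [hg_def]; exact Set.indicator_of_mem hr x
  have hg0 : ∀ r, r ≤ a → g r = 0 := by
    intro r hr
    by_cases hr' : r ∈ Set.Icc (a - h) b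
    · rw [hgx r hr']; exact hx0 r ⟨hr'.1, hr⟩
    · rw [hg_def]; exact Set.indicator_of_notMem hr' x
  haveI : IsFiniteMeasure (volume.restrict (Set.Icc (a - h) b)) :=
    ⟨by rw [Measure.restrict_apply_univ]; exact measure_Icc_lt_top⟩
  have hgIon : IntegrableOn g (Set.Icc (a - h) b) :=
    Integrable.mono' (integrable_const C') hg_sm.aestronglyMeasurable.restrict
      (ae_of_all _ hgb)
  have hgI : Integrable g := by
    have : Integrable (Set.indicator (Set.Icc (a - h) b) g) :=
      (integrable_indicator_iff measurableSet_Icc).2 hgIon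
    rw [hg_def]
    rwa [hg_def, Set.indicator_indicator, Set.inter_self] at this
  -- coordinate extraction
  have hcoord : ∀ (S : Set ℝ) (k : Fin n),
      (∫ r in S, g r) k = ∫ r in S, g r k := by
    intro S k
    have := (ContinuousLinearMap.proj (R := ℂ) (φ := fun _ : Fin n => ℂ) k).integral_comp_comm
      (hgI.integrableOn (s := S))
    simpa using this.symm
  -- shifting left endpoint to a
  have key : ∀ (k : Fin n) (c : ℝ), c ≤ a → ∀ d : ℝ,
      ∫ r in Set.Ioo c d, g r k = ∫ r in Set.Ioo a d, g r k := by
    intro k c hc d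
    have hind : (fun r => g r k) = Set.indicator (Set.Ioi a) (fun r => g r k) := by
      funext r
      by_cases hr : r ∈ Set.Ioi a
      · exact (Set.indicator_of_mem hr (fun r => g r k)).symm
      · rw [hg0 r (not_lt.1 (fun hlt => hr hlt)), Pi.zero_apply,
          Set.indicator_of_notMem hr (fun r => g r k)]
    calc ∫ r in Set.Ioo c d, g r k
        = ∫ r in Set.Ioo c d, Set.indicator (Set.Ioi a) (fun r => g r k) r := by rw [← hind]
      _ = ∫ r in Set.Ioo c d ∩ Set.Ioi a, g r k := setIntegral_indicator measurableSet_Ioi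
      _ = ∫ r in Set.Ioo a d, g r k := by rw [Set.Ioo_inter_Ioi, max_eq_right hc]
  constructor
  · -- continuity
    have h1 : ContinuousOn (fun t => ∫ r in Set.Ioc (a - h) t, g r) (Set.Icc (a - h) b) :=
      intervalIntegral.continuousOn_primitive hgI.integrableOn
    refine h1.congr fun t ht => ?_
    have hsub : Set.Ioo (a - h) t ⊆ Set.Icc (a - h) b :=
      fun r hr => ⟨hr.1.le, hr.2.le.trans ht.2⟩
    exact (setIntegral_congr_fun measurableSet_Ioo fun r hr =>
      (hgx r (hsub hr)).symm).trans integral_Ioc_eq_integral_Ioo.symm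
  · intro t ht G hG
    haveI : IsFiniteMeasure (volume.restrict (Set.Ioo a t)) :=
      ⟨by rw [Measure.restrict_apply_univ]; exact measure_Ioo_lt_top⟩
    haveI : ∀ k, IsFiniteMeasure (ν k) := hν
    -- G in terms of g
    have hGk : ∀ (u : Set.Icc (-h) (0:ℝ)) (k : Fin n),
        G u k = ∫ r in Set.Ioo a (t + ↑u), g r k := by
      intro u k
      have hu1 : -h ≤ (u : ℝ) := u.2.1
      have hu2 : (u : ℝ) ≤ 0 := u.2.2
      have hsub : Set.Ioo (a - h) (t + ↑u) ⊆ Set.Icc (a - h) b := fun r hr =>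
        ⟨hr.1.le, hr.2.le.trans (by have := ht.2; linarith)⟩
      have h1 : (∫ r in Set.Ioo (a - h) (t + ↑u), x r)
          = ∫ r in Set.Ioo (a - h) (t + ↑u), g r :=
        setIntegral_congr_fun measurableSet_Ioo fun r hr => (hgx r (hsub hr)).symm
      rw [congrFun (hG u) k, h1, hcoord]
      exact key k _ haha _
    -- product integrability
    have hprod : ∀ k : Fin n, Integrable
        (fun p : ℝ × (Set.Icc (-h) (0:ℝ)) => g (p.1 + ↑p.2) k * H k p.2)
        ((volume.restrict (Set.Ioo a t)).prod (ν k)) := by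
      intro k
      have hmeas : Measurable fun p : ℝ × (Set.Icc (-h) (0:ℝ)) =>
          g (p.1 + ↑p.2) k * H k p.2 := by
        have hgk : Measurable fun r => g r k := (measurable_pi_apply k).comp hg_sm.measurable
        exact (hgk.comp (measurable_fst.add
          (continuous_subtype_val.measurable.comp measurable_snd))).mul
          ((hHm k).comp measurable_snd)
      refine Integrable.mono' (integrable_const C') hmeas.aestronglyMeasurable
        (ae_of_all _ fun p => ?_)
      rw [norm_mul, hH1 k p.2, mul_one]
      exact (norm_le_pi_norm (g (p.1 + ↑p.2)) k).trans (hgb _)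
    -- translation
    have htrans : ∀ (u : Set.Icc (-h) (0:ℝ)) (k : Fin n),
        ∫ s in Set.Ioo a t, g (s + ↑u) k = ∫ r in Set.Ioo a (t + ↑u), g r k := by
      intro u k
      have hu2 : (u : ℝ) ≤ 0 := u.2.2
      have hat : a ≤ t := ht.1.le
      calc ∫ s in Set.Ioo a t, g (s + ↑u) k
          = ∫ s in Set.Ioc a t, g (s + ↑u) k := (integral_Ioc_eq_integral_Ioo).symm
        _ = ∫ s in a..t, g (s + ↑u) k := (intervalIntegral.integral_of_le hat).symm
        _ = ∫ r in (a + ↑u)..(t + ↑u), g r k := intervalIntegral.integral_comp_add_right (fun r => g r k) ↑u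
        _ = ∫ r in Set.Ioc (a + ↑u) (t + ↑u), g r k :=
            intervalIntegral.integral_of_le (by linarith)
        _ = ∫ r in Set.Ioo (a + ↑u) (t + ↑u), g r k := integral_Ioc_eq_integral_Ioo
        _ = ∫ r in Set.Ioo a (t + ↑u), g r k := key k _ (by linarith) _
    calc T G = ∑ k : Fin n, ∫ u, G u k * H k u ∂(ν k) := hrep G
      _ = ∑ k : Fin n, ∫ u, (∫ s in Set.Ioo a t, g (s + ↑u) k * H k u) ∂(ν k) := by
          refine Finset.sum_congr rfl fun k _ =>
            integral_congr_ae (ae_of_all _ fun u => ?_)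
          beta_reduce
          rw [hGk u k, ← htrans u k, ← integral_mul_const]
      _ = ∑ k : Fin n, ∫ s in Set.Ioo a t, ∫ u, g (s + ↑u) k * H k u ∂(ν k) :=
          Finset.sum_congr rfl fun k _ => (integral_integral_swap (hprod k)).symm
      _ = ∫ s in Set.Ioo a t, ∑ k : Fin n, ∫ u, g (s + ↑u) k * H k u ∂(ν k) :=
          (integral_finset_sum _ fun k _ => (hprod k).integral_prod_left).symm
      _ = ∫ s in Set.Ioo a t, ∑ k : Fin n, ∫ u, x (s + ↑u) k * H k u ∂(ν k) := by
          refine setIntegral_congr_fun measurableSet_Ioo fun s hs => ?_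
          refine Finset.sum_congr rfl fun k _ =>
            integral_congr_ae (ae_of_all _ fun u => ?_)
          have hmem : s + (u : ℝ) ∈ Set.Icc (a - h) b := by
            have hu1 : -h ≤ (u : ℝ) := u.2.1
            have hu2 : (u : ℝ) ≤ 0 := u.2.2
            have := hs.1; have := hs.2; have := ht.2
            constructor <;> linarith
          beta_reduce
          rw [hgx _ hmem]
end

section
/- Let L, R : C(I,ℂⁿ) → ℂⁿ be continuous linear, and suppose L is strictly delayed: there is Δ ∈ (0,h) with Lφ = 0 whenever φ(t) = 0 on [-h,-Δ]. Then for every φ ∈ C(I,ℂⁿ) there exists a unique continuous v : [-h,∞) → ℂⁿ with v_0 = φ such that t ↦ v(t) - L(v_t) is differentiable on [0,∞) with derivative R(v_t); moreover each solution operator S(t) : φ ↦ v_t is a continuous linear map C(I,ℂⁿ) → C(I,ℂⁿ). -/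
/-!
The strict delay makes `L v_t` see only `v` on `[t - h, t - Δ]`. Hence, in the weighted norm
`sup_t e^{-k t} ‖v t‖`, the neutral term of the integrated equation
`v t = φ 0 - L φ + L v_t + ∫₀ᵗ R v_s` gains a factor `e^{-k Δ}` and the integral a factor `1 / k`;
for large `k` the right-hand side is a contraction. Its fixed point is a global solution of
exponential growth, and the same estimate on a compact interval `[0, T]` shows that the difference
of two solutions vanishes. Uniqueness makes the solution linear in `φ`, and the growth bound makes
each solution operator `S(t)` continuous.
-/


open MeasureTheory Filter Topology

/-- A (classical) solution of the neutral equation `d/dt [v(t) - L v_t] = R v_t`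
with initial condition `v_0 = φ`: `v` is continuous on `[-h,∞)`, `v_0 = φ`, and
`t ↦ v(t) - L v_t` is differentiable on `[0,∞)` with derivative `R v_t`
(`V t` is the segment `v_t` as a continuous map, for `t ≥ 0`). -/
def IsNeutralSol (n : ℕ) (h : ℝ)
    (L R : C(Set.Icc (-h) (0:ℝ), Fin n → ℂ) →L[ℂ] (Fin n → ℂ))
    (φ : C(Set.Icc (-h) (0:ℝ), Fin n → ℂ)) (v : ℝ → Fin n → ℂ) : Prop :=
  ContinuousOn v (Set.Ici (-h)) ∧ (∀ s : Set.Icc (-h) (0:ℝ), v ↑s = φ s) ∧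
  ∃ V : ℝ → C(Set.Icc (-h) (0:ℝ), Fin n → ℂ),
    (∀ t, 0 ≤ t → ∀ s : Set.Icc (-h) (0:ℝ), V t s = v (t + ↑s)) ∧
    (∀ t, 0 ≤ t → HasDerivWithinAt (fun τ => v τ - L (V τ)) (R (V t)) (Set.Ici 0) t)

open Set BoundedContinuousFunction

noncomputable section

namespace NeutralFDE

variable {E : Type*} [NormedAddCommGroup E] {h : ℝ}

def history (h : ℝ) (v : C(ℝ, E)) : C(ℝ, C(Icc (-h) (0:ℝ), E)) :=
  ContinuousMap.curry ⟨fun p => v (p.1 + p.2), by fun_prop⟩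

@[simp] theorem history_apply (v : C(ℝ, E)) (t : ℝ) (s : Icc (-h) (0:ℝ)) :
    history h v t s = v (t + s) := rfl

@[simp] theorem history_add (v w : C(ℝ, E)) (t : ℝ) :
    history h (v + w) t = history h v t + history h w t := rfl

theorem history_zero_eq {v : C(ℝ, E)} {φ : C(Icc (-h) (0:ℝ), E)}
    (hv : ∀ s : Icc (-h) (0:ℝ), v s = φ s) : history h v 0 = φ := by
  ext s; simp [hv]

variable [NormedSpace ℂ E]

@[simp] theorem history_smul (c : ℂ) (v : C(ℝ, E)) (t : ℝ) :
    history h (c • v) t = c • history h v t := rfl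

def IsStrictlyDelayed (L : C(Icc (-h) (0:ℝ), E) →L[ℂ] E) (Δ : ℝ) : Prop :=
  ∀ φ : C(Icc (-h) (0:ℝ), E), (∀ s : Icc (-h) (0:ℝ), (s : ℝ) ≤ -Δ → φ s = 0) → L φ = 0

theorem IsStrictlyDelayed.norm_apply_le {L : C(Icc (-h) (0:ℝ), E) →L[ℂ] E} {Δ : ℝ}
    (hL : IsStrictlyDelayed L Δ) (hΔ : Δ ≤ h) {ψ : C(Icc (-h) (0:ℝ), E)} {c : ℝ} (hc : 0 ≤ c)
    (hψ : ∀ s : Icc (-h) (0:ℝ), (s : ℝ) ≤ -Δ → ‖ψ s‖ ≤ c) : ‖L ψ‖ ≤ ‖L‖ * c := by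
  have hmem (s : Icc (-h) (0:ℝ)) : min (s : ℝ) (-Δ) ∈ Icc (-h) (0:ℝ) :=
    ⟨le_min s.2.1 (neg_le_neg hΔ), (min_le_left _ _).trans s.2.2⟩
  -- `L` cannot distinguish `ψ` from its freezing `ψ₁` after time `-Δ`
  let ψ₁ : C(Icc (-h) (0:ℝ), E) := ψ.comp ⟨fun s => ⟨_, hmem s⟩, by fun_prop⟩
  have hψ₁ : L ψ = L ψ₁ := by
    rw [← sub_eq_zero, ← map_sub]
    refine hL _ fun s hs => ?_
    simp [ψ₁, min_eq_left hs]
  rw [hψ₁]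
  refine (L.le_opNorm ψ₁).trans ?_
  gcongr
  exact (ψ₁.norm_le hc).2 fun s => hψ _ (min_le_right _ _)

theorem norm_integral_le_of_norm_le_exp {f : ℝ → E} {c k t : ℝ} (hk : 0 < k) (ht : 0 ≤ t)
    (hf : ∀ s ∈ Icc 0 t, ‖f s‖ ≤ c * Real.exp (k * s)) :
    ‖∫ s in (0:ℝ)..t, f s‖ ≤ c / k * Real.exp (k * t) := by
  have hprim (s : ℝ) :
      HasDerivAt (fun s => c / k * Real.exp (k * s)) (c * Real.exp (k * s)) s := by
    refine (((hasDerivAt_id s).const_mul k).exp.const_mul (c / k)).congr_deriv ?_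
    field_simp
    rfl
  have hint : IntervalIntegrable (fun s => c * Real.exp (k * s)) volume 0 t :=
    Continuous.intervalIntegrable (by fun_prop) _ _
  calc ‖∫ s in (0:ℝ)..t, f s‖ ≤ ∫ s in (0:ℝ)..t, c * Real.exp (k * s) :=
        intervalIntegral.norm_integral_le_of_norm_le ht
          (ae_of_all _ fun s hs => hf s (Ioc_subset_Icc_self hs)) hint
    _ = c / k * Real.exp (k * t) - c / k := by
        rw [intervalIntegral.integral_eq_sub_of_hasDerivAt (fun s _ => hprim s) hint]
        simp
    _ ≤ c / k * Real.exp (k * t) := by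
        have := (norm_nonneg _).trans (hf 0 ⟨le_rfl, ht⟩)
        simp at this
        linarith [div_nonneg this hk.le]

variable (L R : C(Icc (-h) (0:ℝ), E) →L[ℂ] E)

theorem continuous_apply_history (v : C(ℝ, E)) : Continuous fun t => R (history h v t) :=
  R.continuous.comp (history h v).continuous

def neutralOp : C(ℝ, E) →ₗ[ℂ] ℝ → E where
  toFun v t := L (history h v t) + ∫ s in (0:ℝ)..t, R (history h v s)
  map_add' v w := by
    ext t
    simp only [history_add, map_add, Pi.add_apply]
    rw [intervalIntegral.integral_add ((continuous_apply_history R v).intervalIntegrable _ _)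
      ((continuous_apply_history R w).intervalIntegrable _ _)]
    abel
  map_smul' c v := by
    ext t
    simp [intervalIntegral.integral_smul, smul_add]

theorem neutralOp_apply (v : C(ℝ, E)) (t : ℝ) :
    neutralOp L R v t = L (history h v t) + ∫ s in (0:ℝ)..t, R (history h v s) := rfl

theorem neutralOp_apply_zero (v : C(ℝ, E)) : neutralOp L R v 0 = L (history h v 0) := by
  simp [neutralOp_apply]

theorem continuous_neutralOp (v : C(ℝ, E)) : Continuous (neutralOp L R v) :=
  (L.continuous.comp (history h v).continuous).add
    (intervalIntegral.continuous_primitive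
      (fun _ _ => (continuous_apply_history R v).intervalIntegrable _ _) 0)

variable {L} in
theorem norm_neutralOp_le {Δ k : ℝ} (hL : IsStrictlyDelayed L Δ) (hΔ : Δ ∈ Icc 0 h) (hk : 0 < k)
    {v : C(ℝ, E)} {M t : ℝ} (hM : 0 ≤ M) (ht : 0 ≤ t)
    (hv : ∀ σ ∈ Icc (-h) t, ‖v σ‖ ≤ M * Real.exp (k * σ)) :
    ‖neutralOp L R v t‖ ≤ (‖L‖ * Real.exp (-(k * Δ)) + ‖R‖ / k) * M * Real.exp (k * t) := by
  have hv' {s σ : ℝ} (hσ : σ ∈ Icc (-h) s) (hs : s ≤ t) : ‖v σ‖ ≤ M * Real.exp (k * s) :=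
    (hv σ ⟨hσ.1, hσ.2.trans hs⟩).trans (by gcongr; exact hσ.2)
  have hLpart : ‖L (history h v t)‖ ≤ ‖L‖ * (M * Real.exp (k * (t - Δ))) :=
    hL.norm_apply_le hΔ.2 (by positivity) fun σ hσ =>
      hv' ⟨by linarith [σ.2.1], by linarith⟩ (by linarith [hΔ.1])
  have hRpart : ‖∫ s in (0:ℝ)..t, R (history h v s)‖ ≤ ‖R‖ * M / k * Real.exp (k * t) := by
    refine norm_integral_le_of_norm_le_exp hk ht fun s hs => ?_
    calc ‖R (history h v s)‖ ≤ ‖R‖ * ‖history h v s‖ := R.le_opNorm _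
      _ ≤ ‖R‖ * (M * Real.exp (k * s)) := by
        gcongr
        exact ((history h v s).norm_le (by positivity)).2 fun σ =>
          hv' ⟨by linarith [σ.2.1, hs.1], by linarith [σ.2.2]⟩ hs.2
      _ = ‖R‖ * M * Real.exp (k * s) := by ring
  have hexp : Real.exp (k * (t - Δ)) = Real.exp (-(k * Δ)) * Real.exp (k * t) := by
    rw [← Real.exp_add]; ring_nf
  calc ‖neutralOp L R v t‖
        ≤ ‖L‖ * (M * Real.exp (k * (t - Δ))) + ‖R‖ * M / k * Real.exp (k * t) :=
          (norm_add_le _ _).trans (add_le_add hLpart hRpart)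
    _ = _ := by rw [hexp]; ring



def IsIntegralSolution (φ : C(Icc (-h) (0:ℝ), E)) (v : C(ℝ, E)) : Prop :=
  (∀ s : Icc (-h) (0:ℝ), v s = φ s) ∧
    ∀ t, 0 ≤ t → v t - neutralOp L R v t = v 0 - neutralOp L R v 0

namespace IsIntegralSolution

variable {L R} {φ ψ : C(Icc (-h) (0:ℝ), E)} {v w : C(ℝ, E)}

theorem add (hv : IsIntegralSolution L R φ v) (hw : IsIntegralSolution L R ψ w) :
    IsIntegralSolution L R (φ + ψ) (v + w) :=
  ⟨fun s => by simp [hv.1 s, hw.1 s], fun t ht => by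
    simp only [map_add, Pi.add_apply, ContinuousMap.add_apply]
    rw [add_sub_add_comm, hv.2 t ht, hw.2 t ht, add_sub_add_comm]⟩

theorem sub (hv : IsIntegralSolution L R φ v) (hw : IsIntegralSolution L R ψ w) :
    IsIntegralSolution L R (φ - ψ) (v - w) :=
  ⟨fun s => by simp [hv.1 s, hw.1 s], fun t ht => by
    simp only [map_sub, Pi.sub_apply, ContinuousMap.sub_apply]
    rw [sub_sub_sub_comm, hv.2 t ht, hw.2 t ht, sub_sub_sub_comm]⟩

theorem smul (c : ℂ) (hv : IsIntegralSolution L R φ v) : IsIntegralSolution L R (c • φ) (c • v) :=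
  ⟨fun s => by simp [hv.1 s], fun t ht => by
    simp only [map_smul, Pi.smul_apply, ContinuousMap.smul_apply]
    rw [← smul_sub, hv.2 t ht, smul_sub]⟩

end IsIntegralSolution

variable {L R}

theorem exists_pos_contraction_const {Δ : ℝ} (hΔ : 0 < Δ) :
    ∃ k : ℝ, 0 < k ∧ ‖L‖ * Real.exp (-(k * Δ)) + ‖R‖ / k < 1 := by
  have hLpart : Tendsto (fun k : ℝ => ‖L‖ * Real.exp (-(k * Δ))) atTop (𝓝 0) := by
    simpa using (Real.tendsto_exp_atBot.comp (tendsto_neg_atTop_atBot.comp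
      (tendsto_id.atTop_mul_const hΔ))).const_mul ‖L‖
  have hRpart : Tendsto (fun k : ℝ => ‖R‖ / k) atTop (𝓝 0) :=
    tendsto_const_nhds.div_atTop tendsto_id
  obtain ⟨k, hk, hpos⟩ := (((by simpa using hLpart.add hRpart : Tendsto
    (fun k : ℝ => ‖L‖ * Real.exp (-(k * Δ)) + ‖R‖ / k) atTop (𝓝 0)).eventually_lt_const
      one_pos).and (eventually_gt_atTop 0)).exists
  exact ⟨k, hpos, hk⟩

theorem IsIntegralSolution.eq_zero {Δ : ℝ} (hL : IsStrictlyDelayed L Δ) (hΔ : Δ ∈ Ioo 0 h)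
    {d : C(ℝ, E)} (hd : IsIntegralSolution L R 0 d) {t : ℝ} (ht : -h ≤ t) : d t = 0 := by
  rcases le_or_gt t 0 with ht₀ | ht₀
  · exact hd.1 ⟨t, ht, ht₀⟩
  obtain ⟨k, hk, hq⟩ := exists_pos_contraction_const (L := L) (R := R) hΔ.1
  -- the weighted sup `M` of `d` on `[0, t]` satisfies `M ≤ q M` with `q < 1`
  obtain ⟨t₀, ht₀mem, hmax⟩ := isCompact_Icc.exists_isMaxOn (nonempty_Icc.2 ht₀.le)
    (Continuous.continuousOn (f := fun σ => Real.exp (-(k * σ)) * ‖d σ‖) (by fun_prop))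
  set M := Real.exp (-(k * t₀)) * ‖d t₀‖
  have hM : 0 ≤ M := by positivity
  have hweighted {σ : ℝ} (hσ : σ ∈ Icc 0 t) : ‖d σ‖ ≤ M * Real.exp (k * σ) := by
    have := hmax hσ
    rw [mem_ofPred_eq, ← le_div_iff₀' (Real.exp_pos _), Real.exp_neg] at this
    rwa [div_inv_eq_mul] at this
  have hdt₀ : d t₀ = neutralOp L R d t₀ := by
    have h0 : d 0 = 0 := hd.1 ⟨0, by linarith [hΔ.1, hΔ.2], le_rfl⟩
    have := hd.2 t₀ ht₀mem.1
    rwa [neutralOp_apply_zero, history_zero_eq hd.1, h0, map_zero, sub_self, sub_eq_zero] at this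
  have hMq : M ≤ (‖L‖ * Real.exp (-(k * Δ)) + ‖R‖ / k) * M := by
    have := norm_neutralOp_le R hL (Ioo_subset_Icc_self hΔ) hk hM ht₀mem.1 fun σ hσ => by
      rcases le_or_gt σ 0 with hσ₀ | hσ₀
      · have : d σ = 0 := hd.1 ⟨σ, hσ.1, hσ₀⟩
        rw [this, norm_zero]
        positivity
      · exact hweighted ⟨hσ₀.le, hσ.2.trans ht₀mem.2⟩
    rw [← hdt₀] at this
    calc M ≤ Real.exp (-(k * t₀))
          * ((‖L‖ * Real.exp (-(k * Δ)) + ‖R‖ / k) * M * Real.exp (k * t₀)) :=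
          mul_le_mul_of_nonneg_left this (Real.exp_pos _).le
      _ = _ := by rw [mul_comm, mul_assoc, ← Real.exp_add]; simp
  have hM0 : M = 0 := by nlinarith
  simpa [hM0] using hweighted ⟨ht₀.le, le_rfl⟩

theorem IsIntegralSolution.eqOn {Δ : ℝ} (hL : IsStrictlyDelayed L Δ) (hΔ : Δ ∈ Ioo 0 h)
    {φ : C(Icc (-h) (0:ℝ), E)} {v w : C(ℝ, E)} (hv : IsIntegralSolution L R φ v)
    (hw : IsIntegralSolution L R φ w) : EqOn v w (Ici (-h)) := fun _ ht =>
  sub_eq_zero.1 ((sub_self φ ▸ hv.sub hw).eq_zero hL hΔ ht)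

/-- The unknown of the fixed-point problem is `w` in `v = φ̃ + e^{k t} w`, where `φ̃` extends `φ`
by constants: the sup norm of `w` is the weighted norm in which the Picard map contracts. -/
def ansatz (hh : -h ≤ 0) (k : ℝ) (φ : C(Icc (-h) (0:ℝ), E)) (w : ℝ →ᵇ E) : C(ℝ, E) :=
  ContinuousMap.IccExtend hh φ + ⟨fun t => Real.exp (k * t) • w t, by fun_prop⟩

section Ansatz

variable {hh : -h ≤ 0} {k : ℝ} {φ : C(Icc (-h) (0:ℝ), E)} {w : ℝ →ᵇ E}

theorem ansatz_apply (t : ℝ) :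
    ansatz hh k φ w t = IccExtend hh φ t + Real.exp (k * t) • w t := rfl

theorem ansatz_of_mem (hw : ∀ t ≤ 0, w t = 0) (s : Icc (-h) (0:ℝ)) :
    ansatz hh k φ w s = φ s := by
  simp [ansatz_apply, hw s s.2.2]

theorem norm_ansatz_le (t : ℝ) : ‖ansatz hh k φ w t‖ ≤ ‖φ‖ + Real.exp (k * t) * ‖w‖ := by
  rw [ansatz_apply]
  refine (norm_add_le _ _).trans (add_le_add (φ.norm_coe_le_norm _) ?_)
  rw [norm_smul, Real.norm_of_nonneg (Real.exp_pos _).le]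
  gcongr
  exact w.norm_coe_le_norm t

theorem norm_ansatz_sub_le (w' : ℝ →ᵇ E) (t : ℝ) :
    ‖(ansatz hh k φ w - ansatz hh k φ w') t‖ ≤ ‖w - w'‖ * Real.exp (k * t) := by
  simp only [ContinuousMap.sub_apply, ansatz_apply, add_sub_add_left_eq_sub, ← smul_sub,
    norm_smul, Real.norm_of_nonneg (Real.exp_pos _).le]
  rw [mul_comm]
  gcongr
  exact (w - w').norm_coe_le_norm t

end Ansatz

variable (L R) in
def picardFun (hh : -h ≤ 0) (k : ℝ) (φ : C(Icc (-h) (0:ℝ), E)) (w : ℝ →ᵇ E) (t : ℝ) : E :=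
  Real.exp (-(k * max t 0)) • (neutralOp L R (ansatz hh k φ w) (max t 0) - L φ)

section Picard

variable {Δ k : ℝ} {hh : -h ≤ 0} {φ : C(Icc (-h) (0:ℝ), E)}

theorem continuous_picardFun (w : ℝ →ᵇ E) : Continuous (picardFun L R hh k φ w) := by
  have := continuous_neutralOp L R (ansatz hh k φ w)
  unfold picardFun
  fun_prop

theorem norm_exp_neg_smul_le {x : E} {c τ : ℝ} (hx : ‖x‖ ≤ c * Real.exp (k * τ)) :
    ‖Real.exp (-(k * τ)) • x‖ ≤ c := by
  rw [norm_smul, Real.norm_of_nonneg (Real.exp_pos _).le, Real.exp_neg,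
    inv_mul_le_iff₀ (Real.exp_pos _)]
  linarith

theorem norm_picardFun_sub_le (hL : IsStrictlyDelayed L Δ) (hΔ : Δ ∈ Icc 0 h) (hk : 0 < k)
    (w w' : ℝ →ᵇ E) (t : ℝ) :
    ‖picardFun L R hh k φ w t - picardFun L R hh k φ w' t‖
      ≤ (‖L‖ * Real.exp (-(k * Δ)) + ‖R‖ / k) * ‖w - w'‖ := by
  rw [picardFun, picardFun, ← smul_sub, sub_sub_sub_cancel_right, ← Pi.sub_apply, ← map_sub]
  exact norm_exp_neg_smul_le (norm_neutralOp_le R hL hΔ hk (norm_nonneg _) (le_max_right _ _)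
    fun σ _ => norm_ansatz_sub_le w' σ)

theorem norm_picardFun_zero_le (hL : IsStrictlyDelayed L Δ) (hΔ : Δ ∈ Icc 0 h) (hk : 0 < k)
    (t : ℝ) :
    ‖picardFun L R hh k φ 0 t‖
      ≤ ((‖L‖ * Real.exp (-(k * Δ)) + ‖R‖ / k) * Real.exp (k * h) + ‖L‖) * ‖φ‖ := by
  refine norm_exp_neg_smul_le ((norm_sub_le _ _).trans ?_)
  have hN := norm_neutralOp_le R hL hΔ hk (M := ‖φ‖ * Real.exp (k * h)) (by positivity)
    (le_max_right t 0) (v := ansatz hh k φ 0) fun σ hσ => by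
      calc ‖ansatz hh k φ 0 σ‖ ≤ ‖φ‖ := by
            simpa using norm_ansatz_le (hh := hh) (k := k) (w := (0 : ℝ →ᵇ E)) σ
        _ ≤ ‖φ‖ * Real.exp (k * h + k * σ) :=
          le_mul_of_one_le_right (norm_nonneg _) (Real.one_le_exp (by nlinarith [hσ.1]))
        _ = ‖φ‖ * Real.exp (k * h) * Real.exp (k * σ) := by rw [Real.exp_add, mul_assoc]
  have hLφ : ‖L φ‖ ≤ ‖L‖ * ‖φ‖ * Real.exp (k * max t 0) :=
    (L.le_opNorm φ).trans (le_mul_of_one_le_right (by positivity)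
      (Real.one_le_exp (mul_nonneg hk.le (le_max_right _ _))))
  nlinarith [hN, hLφ]

variable (L R) in
def picard (hL : IsStrictlyDelayed L Δ) (hΔ : Δ ∈ Icc 0 h) (hk : 0 < k) (hh : -h ≤ 0)
    (φ : C(Icc (-h) (0:ℝ), E)) (w : ℝ →ᵇ E) : ℝ →ᵇ E :=
  .ofNormedAddCommGroup (picardFun L R hh k φ w) (continuous_picardFun w)
    ((‖L‖ * Real.exp (-(k * Δ)) + ‖R‖ / k) * ‖w‖
      + ((‖L‖ * Real.exp (-(k * Δ)) + ‖R‖ / k) * Real.exp (k * h) + ‖L‖) * ‖φ‖) fun t =>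
    calc ‖picardFun L R hh k φ w t‖
        ≤ ‖picardFun L R hh k φ w t - picardFun L R hh k φ 0 t‖ + ‖picardFun L R hh k φ 0 t‖ :=
          norm_le_norm_sub_add _ _
      _ ≤ _ := add_le_add (by simpa using norm_picardFun_sub_le hL hΔ hk w 0 t)
          (norm_picardFun_zero_le hL hΔ hk t)

end Picard

theorem isIntegralSolution_ansatz (hh : -h ≤ 0) {k : ℝ} {φ : C(Icc (-h) (0:ℝ), E)}
    {w : ℝ →ᵇ E} (hw : ∀ t ≤ 0, w t = 0) (hfix : ∀ t, picardFun L R hh k φ w t = w t) :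
    IsIntegralSolution L R φ (ansatz hh k φ w) := by
  have hconst (t : ℝ) (ht : 0 ≤ t) :
      ansatz hh k φ w t - neutralOp L R (ansatz hh k φ w) t = φ ⟨0, hh, le_rfl⟩ - L φ := by
    rw [ansatz_apply, ← hfix, picardFun, max_eq_left ht, smul_smul, ← Real.exp_add,
      add_neg_cancel, Real.exp_zero, one_smul, IccExtend_of_right_le _ _ ht]
    abel
  exact ⟨ansatz_of_mem hw, fun t ht => (hconst t ht).trans (hconst 0 le_rfl).symm⟩

section Existence

variable [CompleteSpace E] {Δ k : ℝ}

theorem exists_fixedPoint_picard (hL : IsStrictlyDelayed L Δ) (hΔ : Δ ∈ Icc 0 h) (hk : 0 < k)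
    (hq : ‖L‖ * Real.exp (-(k * Δ)) + ‖R‖ / k < 1) (hh : -h ≤ 0) (φ : C(Icc (-h) (0:ℝ), E)) :
    ∃ w : ℝ →ᵇ E, (∀ t ≤ 0, w t = 0) ∧ picard L R hL hΔ hk hh φ w = w ∧
      ‖w‖ ≤ ((‖L‖ * Real.exp (-(k * Δ)) + ‖R‖ / k) * Real.exp (k * h) + ‖L‖)
        / (1 - (‖L‖ * Real.exp (-(k * Δ)) + ‖R‖ / k)) * ‖φ‖ := by
  set q := ‖L‖ * Real.exp (-(k * Δ)) + ‖R‖ / k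
  have hq₀ : 0 ≤ q := by positivity
  let S : Set (ℝ →ᵇ E) := {w | ∀ t ≤ 0, w t = 0}
  have hS : IsClosed S := by
    simp only [S, ofPred_forall]
    exact isClosed_biInter fun t _ => isClosed_eq (continuous_eval_const t) continuous_const
  have : CompleteSpace S := hS.completeSpace_coe
  have : Nonempty S := ⟨⟨0, fun _ _ => rfl⟩⟩
  have hmaps : MapsTo (picard L R hL hΔ hk hh φ) S S := fun w hw t ht => by
    change picardFun L R hh k φ w t = 0
    rw [picardFun, max_eq_right ht, neutralOp_apply_zero, history_zero_eq (ansatz_of_mem hw),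
      sub_self, smul_zero]
  have hcontr : ContractingWith q.toNNReal (hmaps.restrict _ _ _) := by
    refine ⟨by rwa [← NNReal.coe_lt_coe, Real.coe_toNNReal _ hq₀], ?_⟩
    refine LipschitzWith.of_dist_le_mul fun w w' => ?_
    rw [Real.coe_toNNReal _ hq₀, Subtype.dist_eq, Subtype.dist_eq, dist_eq_norm, dist_eq_norm]
    exact (norm_le (by positivity)).2 (norm_picardFun_sub_le hL hΔ hk w w')
  refine ⟨hcontr.fixedPoint _, (hcontr.fixedPoint _).2,
    congrArg Subtype.val (hcontr.fixedPoint_isFixedPt), ?_⟩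
  have hdist := hcontr.dist_fixedPoint_le ⟨0, fun _ _ => rfl⟩
  rw [Real.coe_toNNReal _ hq₀, Subtype.dist_eq, Subtype.dist_eq, dist_zero_left,
    dist_zero_left] at hdist
  refine hdist.trans ?_
  rw [div_mul_eq_mul_div]
  gcongr
  exact (norm_le (by positivity)).2 (norm_picardFun_zero_le hL hΔ hk)

theorem exists_isIntegralSolution (hL : IsStrictlyDelayed L Δ) (hΔ : Δ ∈ Ioo 0 h) :
    ∃ C k : ℝ, 0 ≤ C ∧ 0 ≤ k ∧ ∀ φ : C(Icc (-h) (0:ℝ), E), ∃ v : C(ℝ, E),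
      IsIntegralSolution L R φ v ∧ ∀ t, ‖v t‖ ≤ (1 + C * Real.exp (k * t)) * ‖φ‖ := by
  obtain ⟨k, hk, hq⟩ := exists_pos_contraction_const (L := L) (R := R) hΔ.1
  have hh : -h ≤ 0 := by linarith [hΔ.1, hΔ.2]
  set q := ‖L‖ * Real.exp (-(k * Δ)) + ‖R‖ / k
  refine ⟨(q * Real.exp (k * h) + ‖L‖) / (1 - q), k, div_nonneg (by positivity) (by linarith),
    hk.le, fun φ => ?_⟩
  obtain ⟨w, hw, hfix, hnorm⟩ :=
    exists_fixedPoint_picard hL (Ioo_subset_Icc_self hΔ) hk hq hh φ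
  refine ⟨ansatz hh k φ w, isIntegralSolution_ansatz hh hw (DFunLike.congr_fun hfix),
    fun t => (norm_ansatz_le t).trans ?_⟩
  nlinarith [Real.exp_pos (k * t)]

end Existence

theorem exists_continuousLinearMap_history {Δ : ℝ} (hL : IsStrictlyDelayed L Δ)
    (hΔ : Δ ∈ Ioo 0 h) {v : C(Icc (-h) (0:ℝ), E) → C(ℝ, E)}
    (hv : ∀ φ, IsIntegralSolution L R φ (v φ)) {t C : ℝ} (ht : 0 ≤ t)
    (hbound : ∀ φ, ∀ σ ≤ t, ‖v φ σ‖ ≤ C * ‖φ‖) :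
    ∃ S : C(Icc (-h) (0:ℝ), E) →L[ℂ] C(Icc (-h) (0:ℝ), E), ∀ φ s, S φ s = v φ (t + s) := by
  have hmem (s : Icc (-h) (0:ℝ)) : t + s ∈ Ici (-h) := by simp only [mem_Ici]; linarith [s.2.1]
  let S : C(Icc (-h) (0:ℝ), E) →ₗ[ℂ] C(Icc (-h) (0:ℝ), E) :=
    { toFun φ := history h (v φ) t
      map_add' φ ψ := by
        ext1 s
        exact (hv (φ + ψ)).eqOn hL hΔ ((hv φ).add (hv ψ)) (hmem s)
      map_smul' c φ := by
        ext1 s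
        exact (hv (c • φ)).eqOn hL hΔ ((hv φ).smul c) (hmem s) }
  refine ⟨S.mkContinuous C fun φ => ?_, fun φ s => rfl⟩
  refine ((history h (v φ) t).norm_le ((norm_nonneg _).trans (hbound φ t le_rfl))).2 fun s => ?_
  exact hbound φ _ (by linarith [s.2.2])

section NeutralSol

variable {n : ℕ} {L R : C(Icc (-h) (0:ℝ), Fin n → ℂ) →L[ℂ] (Fin n → ℂ)}
  {φ : C(Icc (-h) (0:ℝ), Fin n → ℂ)}

theorem IsIntegralSolution.isNeutralSol {v : C(ℝ, Fin n → ℂ)}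
    (hv : IsIntegralSolution L R φ v) : IsNeutralSol n h L R φ v := by
  refine ⟨v.continuous.continuousOn, hv.1, history h v, fun _ _ _ => rfl, fun t _ => ?_⟩
  have hconst (τ : ℝ) (hτ : 0 ≤ τ) : v τ - L (history h v τ)
      = v 0 - L (history h v 0) + ∫ s in (0:ℝ)..τ, R (history h v s) := by
    have := hv.2 τ hτ
    rw [neutralOp_apply, neutralOp_apply_zero] at this
    rw [← this]
    abel
  have hprim : HasDerivAt (fun τ => v 0 - L (history h v 0) + ∫ s in (0:ℝ)..τ, R (history h v s))
      (R (history h v t)) t :=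
    ((continuous_apply_history R v).integral_hasStrictDerivAt 0 t).hasDerivAt.const_add _
  exact hprim.hasDerivWithinAt.congr hconst (hconst t ‹_›)

theorem _root_.IsNeutralSol.exists_isIntegralSolution (hh : 0 ≤ h) {v : ℝ → Fin n → ℂ}
    (hv : IsNeutralSol n h L R φ v) :
    ∃ w : C(ℝ, Fin n → ℂ), IsIntegralSolution L R φ w ∧ EqOn w v (Ici (-h)) := by
  obtain ⟨hcont, hinit, V, hV, hderiv⟩ := hv
  let w : C(ℝ, Fin n → ℂ) :=
    ⟨fun t => v (max t (-h)), hcont.comp_continuous (by fun_prop) fun t => le_max_right t (-h)⟩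
  have hwv : EqOn w v (Ici (-h)) := fun t ht => congrArg v (max_eq_left ht)
  have hVw (t : ℝ) (ht : 0 ≤ t) : V t = history h w t := by
    ext1 s
    rw [hV t ht, history_apply, hwv (show -h ≤ t + s by linarith [s.2.1])]
  have hG (t : ℝ) (ht : 0 < t) : HasDerivWithinAt (fun τ => w τ - L (history h w τ))
      (R (history h w t)) (Ioi t) t := by
    rw [← hVw t ht.le]
    refine ((hderiv t ht.le).congr_of_mem (fun τ hτ => ?_) (mem_Ici.2 ht.le)).mono
      fun τ hτ => (ht.trans hτ).le
    rw [hwv (show -h ≤ τ by linarith [mem_Ici.1 hτ]), hVw τ hτ]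
  refine ⟨w, ⟨fun s : Icc (-h) (0:ℝ) => (hwv s.2.1).trans (hinit s), fun t ht => ?_⟩, hwv⟩
  have hFTC := intervalIntegral.integral_eq_sub_of_hasDeriv_right_of_le ht
    (Continuous.continuousOn (by have := (L.continuous.comp (history h w).continuous); fun_prop))
    (fun x hx => hG x hx.1) ((continuous_apply_history R w).intervalIntegrable _ _)
  rw [neutralOp_apply, neutralOp_apply, intervalIntegral.integral_same, hFTC]
  abel

end NeutralSol

end NeutralFDE

end

open NeutralFDE

theorem stmt_14_general (n : ℕ) (h : ℝ)
    (L R : C(Set.Icc (-h) (0:ℝ), Fin n → ℂ) →L[ℂ] (Fin n → ℂ))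
    (Δ : ℝ) (hΔ : Δ ∈ Set.Ioo 0 h)
    (hL : ∀ φ : C(Set.Icc (-h) (0:ℝ), Fin n → ℂ),
      (∀ s : Set.Icc (-h) (0:ℝ), (↑s : ℝ) ≤ -Δ → φ s = 0) → L φ = 0) :
    ∃ sol : C(Set.Icc (-h) (0:ℝ), Fin n → ℂ) → ℝ → Fin n → ℂ,
      (∀ φ, IsNeutralSol n h L R φ (sol φ)) ∧
      (∀ φ v, IsNeutralSol n h L R φ v → ∀ t, -h ≤ t → v t = sol φ t) ∧
      (∀ t, 0 ≤ t →
        ∃ S : C(Set.Icc (-h) (0:ℝ), Fin n → ℂ) →L[ℂ]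
              C(Set.Icc (-h) (0:ℝ), Fin n → ℂ),
          ∀ φ (s : Set.Icc (-h) (0:ℝ)), S φ s = sol φ (t + ↑s)) := by
  obtain ⟨C, k, hC, hk, hsol⟩ := exists_isIntegralSolution (R := R) hL hΔ
  choose v hv hgrowth using hsol
  refine ⟨fun φ => v φ, fun φ => (hv φ).isNeutralSol, fun φ u hu t ht => ?_, fun t ht => ?_⟩
  · obtain ⟨w, hw, hwu⟩ := hu.exists_isIntegralSolution (by linarith [hΔ.1, hΔ.2])
    exact (hwu ht).symm.trans (hw.eqOn hL hΔ (hv φ) ht)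
  · exact exists_continuousLinearMap_history (C := 1 + C * Real.exp (k * t)) hL hΔ hv ht
      fun φ σ hσ => (hgrowth φ σ).trans (by gcongr)

/-- If `L, R : C(I,ℂⁿ) → ℂⁿ` are continuous linear and `L` is
strictly delayed (`Lφ = 0` whenever `φ = 0` on `[-h,-Δ]`, some `Δ ∈ (0,h)`),
then every `φ ∈ C(I,ℂⁿ)` determines a unique solution `v` of the neutral
equation with `v_0 = φ`, and each solution operator `S(t) : φ ↦ v_t` is a
continuous linear map `C(I,ℂⁿ) → C(I,ℂⁿ)`. -/
theorem stmt_14 (n : ℕ) (h : ℝ) (hh : 0 < h)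
    (L R : C(Set.Icc (-h) (0:ℝ), Fin n → ℂ) →L[ℂ] (Fin n → ℂ))
    (Δ : ℝ) (hΔ : Δ ∈ Set.Ioo 0 h)
    (hL : ∀ φ : C(Set.Icc (-h) (0:ℝ), Fin n → ℂ),
      (∀ s : Set.Icc (-h) (0:ℝ), (↑s : ℝ) ≤ -Δ → φ s = 0) → L φ = 0) :
    ∃ sol : C(Set.Icc (-h) (0:ℝ), Fin n → ℂ) → ℝ → Fin n → ℂ,
      (∀ φ, IsNeutralSol n h L R φ (sol φ)) ∧
      (∀ φ v, IsNeutralSol n h L R φ v → ∀ t, -h ≤ t → v t = sol φ t) ∧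
      (∀ t, 0 ≤ t →
        ∃ S : C(Set.Icc (-h) (0:ℝ), Fin n → ℂ) →L[ℂ]
              C(Set.Icc (-h) (0:ℝ), Fin n → ℂ),
          ∀ φ (s : Set.Icc (-h) (0:ℝ)), S φ s = sol φ (t + ↑s)) :=
  stmt_14_general n h L R Δ hΔ hL
end

section
/- Let φ ∈ B_{nA}, and define the continuation φ^c : ℝ → ℂⁿ by φ^c(t) = φ(-h) for t < -h, φ^c = φ on [-h,0], and φ^c(t) = φ(0) for t > 0. Then φ^c is a pointwise limit of a uniformly bounded sequence of continuous maps ℝ → ℂⁿ, every segment (φ^c)_t lies in B_{nA}, and the map t ↦ ι⁻¹(L_E (φ^c)_t) from ℝ to ℂⁿ also has property (A). -/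
open MeasureTheory Filter Topology

/-- For `φ ∈ B_{nA}`, the continuation `φ^c : ℝ → ℂⁿ`
(`φ^c(t) = φ(-h)` for `t < -h`, `φ^c = φ` on `[-h,0]`, `φ^c(t) = φ(0)` for
`t > 0`, i.e. `φ ∘ projIcc`) has property (A), every segment `(φ^c)_t` lies in
`B_{nA}`, and `t ↦ ι⁻¹(L_E (φ^c)_t)` has property (A); `L_E` (as `ℂⁿ`-valued
via `ι`) is characterized by continuity along uniformly bounded pointwise
convergent sequences of continuous maps. -/
theorem stmt_16 (n : ℕ) (h : ℝ) (hh : 0 < h)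
    (L : C(Set.Icc (-h) (0:ℝ), Fin n → ℂ) →L[ℂ] (Fin n → ℂ))
    (LE : (Set.Icc (-h) (0:ℝ) → Fin n → ℂ) → Fin n → ℂ)
    (hLE : ∀ (φ : Set.Icc (-h) (0:ℝ) → Fin n → ℂ)
        (fm : ℕ → C(Set.Icc (-h) (0:ℝ), Fin n → ℂ)),
      (∃ C : ℝ, ∀ m s, ‖fm m s‖ ≤ C) →
      (∀ s, Tendsto (fun m => fm m s) atTop (𝓝 (φ s))) →
      Tendsto (fun m => L (fm m)) atTop (𝓝 (LE φ)))
    (φ : Set.Icc (-h) (0:ℝ) → Fin n → ℂ) (hφA : PropA φ) :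
    PropA (fun t : ℝ => φ (Set.projIcc (-h) 0 (by linarith) t)) ∧
    (∀ t : ℝ, PropA fun s : Set.Icc (-h) (0:ℝ) =>
      φ (Set.projIcc (-h) 0 (by linarith) (t + ↑s))) ∧
    PropA (fun t : ℝ =>
      LE fun s : Set.Icc (-h) (0:ℝ) => φ (Set.projIcc (-h) 0 (by linarith) (t + ↑s))) := by
  obtain ⟨f, hfc, ⟨C, hC⟩, hconv⟩ := hφA
  have hle : (-h) ≤ (0:ℝ) := by linarith
  have hC0 : 0 ≤ C := le_trans (norm_nonneg _) (hC 0 ⟨0, by constructor <;> linarith⟩)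
  -- the continuous-map family of segments
  let Fm : ℕ → C(ℝ × Set.Icc (-h) (0:ℝ), Fin n → ℂ) := fun m =>
    ⟨fun p => f m (Set.projIcc (-h) 0 hle (p.1 + p.2)), by
      exact (hfc m).comp (continuous_projIcc.comp
        (continuous_fst.add (continuous_subtype_val.comp continuous_snd)))⟩
  refine ⟨⟨fun m t => f m (Set.projIcc (-h) 0 hle t),
      fun m => (hfc m).comp continuous_projIcc, ⟨C, fun m x => hC m _⟩,
      fun t => hconv _⟩, fun t => ⟨fun m s => f m (Set.projIcc (-h) 0 hle (t + s)),
      fun m => (hfc m).comp (continuous_projIcc.comp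
        (continuous_const.add continuous_subtype_val)), ⟨C, fun m s => hC m _⟩,
      fun s => hconv _⟩, ?_⟩
  refine ⟨fun m t => L ((Fm m).curry t), fun m =>
      L.continuous.comp (Fm m).curry.continuous, ⟨‖L‖ * C, fun m t => ?_⟩, fun t => ?_⟩
  · calc ‖L ((Fm m).curry t)‖ ≤ ‖L‖ * ‖(Fm m).curry t‖ := L.le_opNorm _
      _ ≤ ‖L‖ * C := by
        refine mul_le_mul_of_nonneg_left (ContinuousMap.norm_le _ hC0 |>.2 ?_) (norm_nonneg L)
        exact fun s => hC m _
  · exact hLE _ (fun m => (Fm m).curry t) ⟨C, fun m s => hC m _⟩ (fun s => hconv _)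
end

section
/- Suppose the solution semigroup of d/dt[v(t) - L v_t] = R v_t on C(I,ℂⁿ) satisfies ‖S(t)‖ ≤ c e^{γt} for all t ≥ 0. Then every column X_j of the fundamental solution (the generalized solution with initial value 0 on [-h,0) and value e_j at 0) satisfies |X_j(t)| ≤ c e^{γt} for all t ≥ 0. -/
open MeasureTheory Filter Topology

/-- Generalized solution of the integrated neutral equation with extended
operators `L_E`, `R_E` and initial datum `φ ∈ B_{nA}`. -/
def IsGenSol (n : ℕ) (h : ℝ)
    (LE RE : (Set.Icc (-h) (0:ℝ) → Fin n → ℂ) → Fin n → ℂ)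
    (φ : Set.Icc (-h) (0:ℝ) → Fin n → ℂ) (y : ℝ → Fin n → ℂ) : Prop :=
  (∀ s : Set.Icc (-h) (0:ℝ), y ↑s = φ s) ∧
  (∀ b : ℝ, PropA fun t : Set.Icc (-h) b => y ↑t) ∧
  ∀ t, 0 < t →
    MeasureTheory.IntegrableOn
      (fun s => RE fun u : Set.Icc (-h) (0:ℝ) => y (s + ↑u)) (Set.Ioo 0 t) ∧
    y t - LE (fun s : Set.Icc (-h) (0:ℝ) => y (t + ↑s)) =
      y 0 - LE φ + ∫ s in Set.Ioo 0 t, RE fun u : Set.Icc (-h) (0:ℝ) => y (s + ↑u)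

/-!
The averages `v_ε(t) = ε⁻¹ ∫_t^{t+ε} X` of the fundamental solution are classical
solutions: `v_ε(t) - L v_{ε,t} = X(0) + ε⁻¹ ∫_t^{t+ε} ∫_0^r R_E X_u du dr`, because averaging
commutes with the σ-extensions `L_E`, `R_E`. Their initial segments are bounded by
`1 + ∫_0^ε |R_E X_u| du` since `L_E X_r = 0` for `r < Δ`, so the semigroup bound gives
`|v_ε(t)| ≤ c e^{γt} (1 + o(1))`. Finally `v_ε(t) → X(t)`: the same identity reduces this to
`L v_{ε,t} → L_E X_t`, which only involves values at times `≤ t - Δ`, so the convergence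
propagates by steps of length `Δ`.
-/

open Set

section SigmaExtension

variable {α E F : Type*} [TopologicalSpace α] [NormedAddCommGroup E] [NormedSpace ℂ E]
  [NormedAddCommGroup F] [NormedSpace ℂ F]

def SigmaExtends (T : C(α, E) →L[ℂ] F) (TE : (α → E) → F) : Prop :=
  ∀ (φ : α → E) (fm : ℕ → C(α, E)), (∃ C : ℝ, ∀ m s, ‖fm m s‖ ≤ C) →
    (∀ s, Tendsto (fun m => fm m s) atTop (𝓝 (φ s))) → Tendsto (fun m => T (fm m)) atTop (𝓝 (TE φ))

theorem SigmaExtends.apply_coe [CompactSpace α] {T : C(α, E) →L[ℂ] F} {TE : (α → E) → F}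
    (hT : SigmaExtends T TE) (f : C(α, E)) : TE f = T f :=
  tendsto_nhds_unique (hT f (fun _ => f) ⟨‖f‖, fun _ => f.norm_coe_le_norm⟩
    fun _ => tendsto_const_nhds) tendsto_const_nhds

theorem SigmaExtends.apply_zero [CompactSpace α] {T : C(α, E) →L[ℂ] F} {TE : (α → E) → F}
    (hT : SigmaExtends T TE) : TE 0 = 0 := by
  simpa using hT.apply_coe 0

end SigmaExtension

section PropA

variable {α β E : Type*} [TopologicalSpace α] [TopologicalSpace β] [NormedAddCommGroup E]

theorem PropA.exists_bound {φ : α → E} (hφ : PropA φ) : ∃ C, ∀ x, ‖φ x‖ ≤ C := by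
  obtain ⟨f, -, ⟨C, hC⟩, hlim⟩ := hφ
  exact ⟨C, fun x => le_of_tendsto' (hlim x).norm fun m => hC m x⟩

theorem PropA.comp {φ : α → E} (hφ : PropA φ) {g : β → α} (hg : Continuous g) : PropA (φ ∘ g) := by
  obtain ⟨f, hfc, hbdd, hlim⟩ := hφ
  exact ⟨fun m => f m ∘ g, fun m => (hfc m).comp hg,
    hbdd.imp fun C hC m y => hC m (g y), fun y => hlim (g y)⟩

theorem propA_const (e : E) : PropA fun _ : α => e :=
  ⟨fun _ _ => e, fun _ => continuous_const, ⟨‖e‖, fun _ _ => le_rfl⟩,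
    fun _ => tendsto_const_nhds⟩

theorem PropA.integrableOn_Icc {a b : ℝ} {X : ℝ → E}
    (hX : PropA fun t : Icc a b => X t) : IntegrableOn X (Icc a b) := by
  rcases lt_or_ge b a with hba | hab
  · simp [Icc_eq_empty_of_lt hba]
  obtain ⟨C, hC⟩ := hX.exists_bound
  obtain ⟨f, hfc, -, hlim⟩ := hX
  have hmeas : AEStronglyMeasurable X (volume.restrict (Icc a b)) := by
    refine aestronglyMeasurable_of_tendsto_ae atTop
      (f := fun m t => f m (projIcc a b hab t))
      (fun m => ((hfc m).comp continuous_projIcc).aestronglyMeasurable) ?_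
    filter_upwards [ae_restrict_mem measurableSet_Icc] with t ht
    simpa [projIcc_of_mem hab ht] using hlim ⟨t, ht⟩
  refine Integrable.mono' (integrable_const C) hmeas ?_
  filter_upwards [ae_restrict_mem measurableSet_Icc] with t ht
  exact hC ⟨t, ht⟩

end PropA

section Delay

variable {E F : Type*} [NormedAddCommGroup E] [NormedSpace ℂ E]
  [NormedAddCommGroup F] [NormedSpace ℂ F] {h Δ : ℝ}
  {T : C(Icc (-h) (0:ℝ), E) →L[ℂ] F} {TE : (Icc (-h) (0:ℝ) → E) → F}

def IsStrictlyDelayed (Δ : ℝ) (T : C(Icc (-h) (0:ℝ), E) →L[ℂ] F) : Prop :=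
  ∀ φ : C(Icc (-h) (0:ℝ), E), (∀ s : Icc (-h) (0:ℝ), (s : ℝ) ≤ -Δ → φ s = 0) → T φ = 0

/-- The cut-offs `χ k`, equal to `0` left of `-Δ` and to `1` right of `-Δ + 1 / (k + 1)`, glue
approximants of `φ` and of `ψ` into approximants of `ψ` on which `T` takes the values it takes on
the approximants of `φ`. -/
theorem IsStrictlyDelayed.sigmaExtends_eq (hT₀ : IsStrictlyDelayed Δ T)
    (hT : SigmaExtends T TE) {φ ψ : Icc (-h) (0:ℝ) → E} (hφ : PropA φ) (hψ : PropA ψ)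
    (heq : ∀ s : Icc (-h) (0:ℝ), (s : ℝ) ≤ -Δ → φ s = ψ s) : TE φ = TE ψ := by
  obtain ⟨f, hfc, ⟨Cf, hCf⟩, hf⟩ := hφ
  obtain ⟨g, hgc, ⟨Cg, hCg⟩, hg⟩ := hψ
  let χ : ℕ → ℝ → ℝ := fun k s => max 0 (min 1 ((k + 1) * (s + Δ)))
  have hχ_zero : ∀ k (s : ℝ), s ≤ -Δ → χ k s = 0 := fun k s hs =>
    max_eq_left <| (min_le_right _ _).trans <|
      mul_nonpos_of_nonneg_of_nonpos (by positivity) (by linarith)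
  have hχ_norm : ∀ k s, ‖χ k s‖ ≤ 1 := fun k s => by
    rw [Real.norm_of_nonneg (le_max_left _ _)]
    exact max_le zero_le_one (min_le_left _ _)
  let fm : ℕ → C(Icc (-h) (0:ℝ), E) := fun k => ⟨f k, hfc k⟩
  let gm : ℕ → C(Icc (-h) (0:ℝ), E) := fun k =>
    ⟨fun s => f k s + χ k s • (g k s - f k s), by fun_prop⟩
  have hfg : ∀ k, T (gm k) = T (fm k) := fun k => by
    rw [← sub_eq_zero, ← map_sub]
    refine hT₀ _ fun s hs => ?_
    simp [fm, gm, hχ_zero k s hs]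
  have hgm : Tendsto (fun k => T (gm k)) atTop (𝓝 (TE ψ)) := by
    refine hT ψ gm ⟨Cf + (Cg + Cf), fun k s => ?_⟩ fun s => ?_
    · have hχgf : ‖χ k s • (g k s - f k s)‖ ≤ 1 * (‖g k s‖ + ‖f k s‖) := by
        rw [norm_smul]
        exact mul_le_mul (hχ_norm k s) (norm_sub_le _ _) (norm_nonneg _) zero_le_one
      calc ‖f k s + χ k s • (g k s - f k s)‖ ≤ ‖f k s‖ + 1 * (‖g k s‖ + ‖f k s‖) :=
            (norm_add_le _ _).trans (add_le_add_right hχgf _)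
        _ ≤ Cf + (Cg + Cf) := by linarith [hCf k s, hCg k s]
    rcases le_or_gt (s : ℝ) (-Δ) with hs | hs
    · simpa [gm, hχ_zero _ _ hs, heq s hs] using hf s
    · have hχ_one : ∀ᶠ k in atTop, χ k s = 1 := by
        have : Tendsto (fun k : ℕ => ((k : ℝ) + 1) * (s + Δ)) atTop atTop :=
          (tendsto_natCast_atTop_atTop.atTop_add tendsto_const_nhds).atTop_mul_const
            (by linarith)
        filter_upwards [this.eventually_ge_atTop 1] with k hk
        simp [χ, hk]
      refine (hg s).congr' ?_
      filter_upwards [hχ_one] with k hk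
      simp [gm, hk]
  simp only [hfg] at hgm
  exact tendsto_nhds_unique (hT φ fm ⟨Cf, hCf⟩ hf) hgm

theorem IsStrictlyDelayed.sigmaExtends_eq_zero (hT₀ : IsStrictlyDelayed Δ T)
    (hT : SigmaExtends T TE) {φ : Icc (-h) (0:ℝ) → E} (hφ : PropA φ)
    (hφ₀ : ∀ s : Icc (-h) (0:ℝ), (s : ℝ) ≤ -Δ → φ s = 0) : TE φ = 0 :=
  (hT₀.sigmaExtends_eq hT hφ (propA_const 0) hφ₀).trans hT.apply_zero

theorem IsStrictlyDelayed.tendsto_sigmaExtends (hT₀ : IsStrictlyDelayed Δ T)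
    (hT : SigmaExtends T TE) (hΔh : Δ ≤ h) {fm : ℕ → C(Icc (-h) (0:ℝ), E)}
    {φ : Icc (-h) (0:ℝ) → E} (hφ : PropA φ) (hbdd : ∃ C : ℝ, ∀ m s, ‖fm m s‖ ≤ C)
    (hlim : ∀ s : Icc (-h) (0:ℝ), (s : ℝ) ≤ -Δ → Tendsto (fun m => fm m s) atTop (𝓝 (φ s))) :
    Tendsto (fun m => T (fm m)) atTop (𝓝 (TE φ)) := by
  let clamp : C(Icc (-h) (0:ℝ), Icc (-h) (0:ℝ)) :=
    ⟨fun s => ⟨min s (-Δ), le_min s.2.1 (by linarith), (min_le_left _ _).trans s.2.2⟩,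
      by fun_prop⟩
  have hclamp : ∀ s : Icc (-h) (0:ℝ), (clamp s : ℝ) ≤ -Δ := fun s => min_le_right _ _
  have hclamp_eq : ∀ s : Icc (-h) (0:ℝ), (s : ℝ) ≤ -Δ → clamp s = s := fun s hs =>
    Subtype.ext (min_eq_left hs)
  have hT_eq : ∀ m, T (fm m) = T ((fm m).comp clamp) := fun m => by
    rw [← sub_eq_zero, ← map_sub]
    exact hT₀ _ fun s hs => by simp [hclamp_eq s hs]
  have hlim' := hT (φ ∘ clamp) (fun m => (fm m).comp clamp)
    (hbdd.imp fun C hC m s => hC m (clamp s)) fun s => hlim (clamp s) (hclamp s)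
  rw [hT₀.sigmaExtends_eq hT (hφ.comp clamp.continuous) hφ
    fun s hs => by simp [hclamp_eq s hs]] at hlim'
  simpa only [hT_eq] using hlim'

end Delay

section Mollify

variable {E : Type*} [NormedAddCommGroup E] [NormedSpace ℝ E] {X Y : ℝ → E} {ε t : ℝ}

noncomputable def mollify (X : ℝ → E) (ε t : ℝ) : E := ε⁻¹ • ∫ r in t..t + ε, X r

theorem mollify_eq_smul_sub (hX : ∀ a b, IntervalIntegrable X volume a b) (ε t : ℝ) :
    mollify X ε t = ε⁻¹ • ((∫ r in (0:ℝ)..t + ε, X r) - ∫ r in (0:ℝ)..t, X r) := by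
  rw [mollify, intervalIntegral.integral_interval_sub_left (hX _ _) (hX _ _)]

theorem continuous_mollify (hX : ∀ a b, IntervalIntegrable X volume a b) (ε : ℝ) :
    Continuous (mollify X ε) := by
  have hP := intervalIntegral.continuous_primitive hX 0
  simp_rw [funext (mollify_eq_smul_sub hX ε)]
  exact ((hP.comp (continuous_add_const ε)).sub hP).const_smul _

theorem norm_mollify_le {C : ℝ} (hε : 0 < ε) (hC : ∀ x ∈ Ioc t (t + ε), ‖X x‖ ≤ C) :
    ‖mollify X ε t‖ ≤ C := by
  have hint : ‖∫ r in t..t + ε, X r‖ ≤ C * |t + ε - t| :=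
    intervalIntegral.norm_integral_le_of_norm_le_const fun x hx =>
      hC x (by rwa [uIoc_of_le (by linarith)] at hx)
  rw [add_sub_cancel_left, abs_of_pos hε] at hint
  rw [mollify, norm_smul, Real.norm_of_nonneg (inv_nonneg.2 hε.le)]
  calc ε⁻¹ * ‖∫ r in t..t + ε, X r‖ ≤ ε⁻¹ * (C * ε) := by gcongr
    _ = C := by field_simp

theorem mollify_comp_add_right (X : ℝ → E) (a ε t : ℝ) :
    mollify (fun u => X (u + a)) ε t = mollify X ε (t + a) := by
  rw [mollify, mollify, intervalIntegral.integral_comp_add_right, add_right_comm]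

theorem mollify_congr (hXY : EqOn X Y (Icc t (t + ε))) (hε : 0 ≤ ε) :
    mollify X ε t = mollify Y ε t := by
  rw [mollify, mollify, intervalIntegral.integral_congr (by rwa [uIcc_of_le (by linarith)])]

theorem mollify_sub (hX : IntervalIntegrable X volume t (t + ε))
    (hY : IntervalIntegrable Y volume t (t + ε)) :
    mollify (fun u => X u - Y u) ε t = mollify X ε t - mollify Y ε t := by
  rw [mollify, intervalIntegral.integral_sub hX hY, smul_sub, mollify, mollify]

theorem mollify_const [CompleteSpace E] (e : E) (hε : ε ≠ 0) : mollify (fun _ => e) ε t = e := by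
  rw [mollify, intervalIntegral.integral_const, add_sub_cancel_left, smul_smul,
    inv_mul_cancel₀ hε, one_smul]

theorem ContinuousLinearMap.mollify_comp_comm {𝕜 F : Type*} [RCLike 𝕜] [NormedAddCommGroup F]
    [NormedSpace ℝ F] [NormedSpace 𝕜 E] [NormedSpace 𝕜 F] [CompleteSpace E] [CompleteSpace F]
    (T : E →L[𝕜] F)
    (hX : IntervalIntegrable X volume t (t + ε)) :
    mollify (fun u => T (X u)) ε t = T (mollify X ε t) := by
  rw [mollify, mollify, T.intervalIntegral_comp_comm hX, T.map_smul_of_tower]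

theorem tendsto_mollify_of_bounded {Xk : ℕ → ℝ → E} {C : ℝ} (hε : 0 ≤ ε)
    (hXk : ∀ k, Continuous (Xk k)) (hbdd : ∀ k, ∀ u ∈ Ioc t (t + ε), ‖Xk k u‖ ≤ C)
    (hlim : ∀ u ∈ Ioc t (t + ε), Tendsto (fun k => Xk k u) atTop (𝓝 (X u))) :
    Tendsto (fun k => mollify (Xk k) ε t) atTop (𝓝 (mollify X ε t)) := by
  have hI : uIoc t (t + ε) = Ioc t (t + ε) := uIoc_of_le (by linarith)
  refine (intervalIntegral.tendsto_integral_filter_of_dominated_convergence (fun _ => C)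
    (Eventually.of_forall fun k => (hXk k).aestronglyMeasurable)
    (Eventually.of_forall fun k => ae_of_all _ fun u hu => hbdd k u (hI ▸ hu))
    intervalIntegrable_const (ae_of_all _ fun u hu => hlim u (hI ▸ hu))).const_smul ε⁻¹

theorem tendsto_mollify_nhdsGT [CompleteSpace E] (hX : Continuous X) (t : ℝ) :
    Tendsto (fun ε => mollify X ε t) (𝓝[>] 0) (𝓝 (X t)) := by
  have hX' : ∀ a b, IntervalIntegrable X volume a b := hX.intervalIntegrable
  simp_rw [mollify_eq_smul_sub hX']
  exact (intervalIntegral.integral_hasDerivAt_right (hX' 0 t)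
    hX.aestronglyMeasurable.stronglyMeasurableAtFilter hX.continuousAt).tendsto_slope_zero_right

theorem hasDerivAt_mollify_primitive [CompleteSpace E]
    (hY : ∀ a b, IntervalIntegrable Y volume a b) (ε t : ℝ) :
    HasDerivAt (mollify (fun τ => ∫ r in (0:ℝ)..τ, Y r) ε) (mollify Y ε t) t := by
  set X : ℝ → E := fun τ => ∫ r in (0:ℝ)..τ, Y r
  have hX : Continuous X := intervalIntegral.continuous_primitive hY 0
  have hX' : ∀ a b, IntervalIntegrable X volume a b := hX.intervalIntegrable
  have hderiv : ∀ τ, HasDerivAt (fun τ => ∫ r in (0:ℝ)..τ, X r) (X τ) τ := fun τ =>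
    intervalIntegral.integral_hasDerivAt_right (hX' 0 τ)
      hX.aestronglyMeasurable.stronglyMeasurableAtFilter hX.continuousAt
  rw [funext (mollify_eq_smul_sub hX' ε), mollify_eq_smul_sub hY]
  exact (((hderiv (t + ε)).comp_add_const t ε).sub (hderiv t)).const_smul ε⁻¹

end Mollify

section Averaging

variable {E F : Type*} [NormedAddCommGroup E] [NormedSpace ℂ E] [CompleteSpace E]
  [NormedAddCommGroup F] [NormedSpace ℂ F] [CompleteSpace F] {h : ℝ}

/-- Replacing `X` by the approximants `f k` turns the window `w` into a mollified continuous-map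
valued curve, with which `T` commutes; both sides then pass to the limit by dominated
convergence. -/
theorem SigmaExtends.apply_eq_mollify {T : C(Icc (-h) (0:ℝ), E) →L[ℂ] F}
    {TE : (Icc (-h) (0:ℝ) → E) → F} (hT : SigmaExtends T TE) (hh : 0 ≤ h) {X : ℝ → E} {b : ℝ}
    (hX : PropA fun t : Icc (-h) b => X t) {ε τ : ℝ} (hε : 0 < ε) (hτ : 0 ≤ τ) (hb : τ + ε ≤ b)
    (w : C(Icc (-h) (0:ℝ), E)) (hw : ∀ s : Icc (-h) (0:ℝ), w s = mollify X ε (τ + s)) :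
    T w = mollify (fun u => TE fun s : Icc (-h) (0:ℝ) => X (u + s)) ε τ := by
  have hhb : -h ≤ b := by linarith
  obtain ⟨f, hfc, ⟨C, hC⟩, hlim⟩ := hX
  have hC₀ : 0 ≤ C := (norm_nonneg _).trans (hC 0 ⟨b, hhb, le_rfl⟩)
  have hmem : ∀ u ∈ Ioc τ (τ + ε), ∀ s : Icc (-h) (0:ℝ), u + s ∈ Icc (-h) b :=
    fun u hu s => ⟨by linarith [hu.1, s.2.1], by linarith [hu.2, s.2.2]⟩
  let Y : ℕ → C(ℝ, C(Icc (-h) (0:ℝ), E)) := fun k => ContinuousMap.curry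
    ⟨fun q : ℝ × Icc (-h) (0:ℝ) => f k (projIcc (-h) b hhb (q.1 + q.2)),
      (hfc k).comp (continuous_projIcc.comp (by fun_prop))⟩
  have hY_lim : ∀ u ∈ Ioc τ (τ + ε), ∀ s : Icc (-h) (0:ℝ),
      Tendsto (fun k => Y k u s) atTop (𝓝 (X (u + s))) := fun u hu s => by
    simpa [Y, projIcc_of_mem hhb (hmem u hu s)] using hlim ⟨_, hmem u hu s⟩
  have hY_norm : ∀ k u, ‖Y k u‖ ≤ C := fun k u =>
    (ContinuousMap.norm_le _ hC₀).2 fun s => hC k _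
  have hY_int : ∀ k, IntervalIntegrable (Y k) volume τ (τ + ε) := fun k =>
    (Y k).continuous.intervalIntegrable _ _
  let A : ℕ → C(Icc (-h) (0:ℝ), E) := fun k => mollify (Y k) ε τ
  have hA : ∀ k s, A k s = mollify (fun u => Y k u s) ε τ := fun k s =>
    ((ContinuousMap.evalCLM ℂ s).mollify_comp_comm (hY_int k)).symm
  have hA_lim : Tendsto (fun k => T (A k)) atTop (𝓝 (T w)) := by
    refine hT.apply_coe w ▸ hT w A ⟨C, fun k s => ?_⟩ fun s => ?_
    · rw [hA]
      exact norm_mollify_le hε fun u _ => hC k _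
    · simp_rw [hA, hw, ← mollify_comp_add_right]
      exact tendsto_mollify_of_bounded hε.le
        (fun k => (ContinuousMap.evalCLM ℂ s).continuous.comp (Y k).continuous)
        (fun k u _ => hC k _) fun u hu => hY_lim u hu s
  have hA_lim' : Tendsto (fun k => T (A k)) atTop
      (𝓝 (mollify (fun u => TE fun s : Icc (-h) (0:ℝ) => X (u + s)) ε τ)) := by
    simp_rw [A, ← T.mollify_comp_comm (hY_int _)]
    refine tendsto_mollify_of_bounded (C := ‖T‖ * C) hε.le
      (fun k => T.continuous.comp (Y k).continuous)
      (fun k u _ => T.le_opNorm_of_le (hY_norm k u)) fun u hu => ?_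
    exact hT _ (fun k => Y k u) ⟨C, fun k s => hC k _⟩ (hY_lim u hu)
  exact tendsto_nhds_unique hA_lim hA_lim'

end Averaging

theorem intervalIntegrable_of_integrableOn_Ioo {E : Type*} [NormedAddCommGroup E]
    {f : ℝ → E} (hf₀ : ∀ t < 0, f t = 0) (hf : ∀ t > 0, IntegrableOn f (Ioo 0 t)) (a b : ℝ) :
    IntervalIntegrable f volume a b := by
  rw [intervalIntegrable_iff]
  have hneg : IntegrableOn f (Iio 0) :=
    integrableOn_zero.congr_fun (fun t ht => (hf₀ t ht).symm) measurableSet_Iio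
  have hzero : IntegrableOn f {0} := integrableOn_singleton (hx := by simp)
  refine ((hneg.union hzero).union (hf (max (max a b) 0 + 1) (by positivity))).mono_set
    fun x hx => ?_
  rcases lt_trichotomy x 0 with hx₀ | rfl | hx₀
  · exact Or.inl (Or.inl hx₀)
  · exact Or.inl (Or.inr rfl)
  · exact Or.inr ⟨hx₀, by linarith [hx.2, le_max_left (max a b) 0]⟩

noncomputable def integratedRHS {E : Type*} [NormedAddCommGroup E] [NormedSpace ℝ E] {h : ℝ}
    (RE : (Icc (-h) (0:ℝ) → E) → E) (X : ℝ → E) (t : ℝ) : E :=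
  ∫ u in (0:ℝ)..t, RE fun s : Icc (-h) (0:ℝ) => X (u + s)

namespace IsGenSol

variable {n : ℕ} {h Δ : ℝ} {L R : C(Icc (-h) (0:ℝ), Fin n → ℂ) →L[ℂ] (Fin n → ℂ)}
  {LE RE : (Icc (-h) (0:ℝ) → Fin n → ℂ) → Fin n → ℂ} {φ : Icc (-h) (0:ℝ) → Fin n → ℂ}
  {X : ℝ → Fin n → ℂ}

theorem propA_window (hX : IsGenSol n h LE RE φ X) {t : ℝ} (ht : 0 ≤ t) :
    PropA fun s : Icc (-h) (0:ℝ) => X (t + s) :=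
  (hX.2.1 t).comp (g := fun s : Icc (-h) (0:ℝ) => (⟨t + s, by linarith [s.2.1], by
    linarith [s.2.2]⟩ : Icc (-h) t)) (by fun_prop)

theorem intervalIntegrable (hh : 0 ≤ h) (hX0 : ∀ t < 0, X t = 0)
    (hX : IsGenSol n h LE RE φ X) (a b : ℝ) : IntervalIntegrable X volume a b :=
  intervalIntegrable_of_integrableOn_Ioo hX0 (fun t _ => (hX.2.1 t).integrableOn_Icc.mono_set
    fun _ hu => ⟨by linarith [hu.1], hu.2.le⟩) a b

theorem intervalIntegrable_rhs (hRE : SigmaExtends R RE) (hX0 : ∀ t < 0, X t = 0)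
    (hX : IsGenSol n h LE RE φ X) (a b : ℝ) :
    IntervalIntegrable (fun u => RE fun s : Icc (-h) (0:ℝ) => X (u + s)) volume a b := by
  refine intervalIntegrable_of_integrableOn_Ioo (fun u hu => ?_) (fun t ht => (hX.2.2 t ht).1) a b
  have : (fun s : Icc (-h) (0:ℝ) => X (u + s)) = 0 := funext fun s => hX0 _ (by linarith [s.2.2])
  rw [this, hRE.apply_zero]

theorem continuous_integratedRHS (hRE : SigmaExtends R RE) (hX0 : ∀ t < 0, X t = 0)
    (hX : IsGenSol n h LE RE φ X) : Continuous (integratedRHS RE X) :=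
  intervalIntegral.continuous_primitive (hX.intervalIntegrable_rhs hRE hX0) 0

theorem LE_window_eq_zero (hL₀ : IsStrictlyDelayed Δ L) (hLE : SigmaExtends L LE)
    (hX0 : ∀ t < 0, X t = 0) (hX : IsGenSol n h LE RE φ X) {t : ℝ} (ht : 0 ≤ t) (htΔ : t < Δ) :
    LE (fun s : Icc (-h) (0:ℝ) => X (t + s)) = 0 :=
  hL₀.sigmaExtends_eq_zero hLE (hX.propA_window ht) fun _ hs => hX0 _ (by linarith)

theorem eq_add_integratedRHS (hL₀ : IsStrictlyDelayed Δ L) (hΔ : 0 < Δ)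
    (hLE : SigmaExtends L LE) (hX0 : ∀ t < 0, X t = 0) (hX : IsGenSol n h LE RE φ X) {t : ℝ}
    (ht : 0 ≤ t) :
    X t = X 0 + LE (fun s : Icc (-h) (0:ℝ) => X (t + s)) + integratedRHS RE X t := by
  have hφ : LE φ = 0 := by
    simpa [hX.1] using hX.LE_window_eq_zero hL₀ hLE hX0 le_rfl hΔ
  rcases ht.eq_or_lt with rfl | ht
  · simpa [integratedRHS, hX.1] using hφ
  have heq := (hX.2.2 t ht).2
  rw [hφ, sub_zero, sub_eq_iff_eq_add] at heq
  rw [heq, integratedRHS, intervalIntegral.integral_of_le ht.le, integral_Ioc_eq_integral_Ioo]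
  abel

theorem L_apply_mollify_window (hh : 0 ≤ h) (hL₀ : IsStrictlyDelayed Δ L) (hΔ : 0 < Δ)
    (hLE : SigmaExtends L LE) (hRE : SigmaExtends R RE) (hX0 : ∀ t < 0, X t = 0)
    (hX : IsGenSol n h LE RE φ X) {ε τ : ℝ} (hε : 0 < ε) (hτ : 0 ≤ τ)
    (w : C(Icc (-h) (0:ℝ), Fin n → ℂ)) (hw : ∀ s : Icc (-h) (0:ℝ), w s = mollify X ε (τ + s)) :
    L w = mollify X ε τ - X 0 - mollify (integratedRHS RE X) ε τ := by
  have hXi := hX.intervalIntegrable hh hX0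
  have hGi := (hX.continuous_integratedRHS hRE hX0).intervalIntegrable (μ := volume)
  have hLE_eq : EqOn (fun u => LE fun s : Icc (-h) (0:ℝ) => X (u + s))
      (fun u => X u - X 0 - integratedRHS RE X u) (Icc τ (τ + ε)) := fun u hu => by
    dsimp only
    rw [hX.eq_add_integratedRHS hL₀ hΔ hLE hX0 (hτ.trans hu.1)]
    abel
  rw [hLE.apply_eq_mollify hh (hX.2.1 (τ + ε)) hε hτ le_rfl w hw, mollify_congr hLE_eq hε.le,
    mollify_sub ((hXi _ _).sub intervalIntegrable_const) (hGi _ _),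
    mollify_sub (hXi _ _) intervalIntegrable_const, mollify_const _ hε.ne']

theorem isNeutralSol_mollify (hh : 0 ≤ h) (hL₀ : IsStrictlyDelayed Δ L) (hΔ : 0 < Δ)
    (hLE : SigmaExtends L LE) (hRE : SigmaExtends R RE) (hX0 : ∀ t < 0, X t = 0)
    (hX : IsGenSol n h LE RE φ X) {ε : ℝ} (hε : 0 < ε) (φ₀ : C(Icc (-h) (0:ℝ), Fin n → ℂ))
    (hφ₀ : ∀ s : Icc (-h) (0:ℝ), φ₀ s = mollify X ε s) :
    IsNeutralSol n h L R φ₀ (mollify X ε) := by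
  have hv := continuous_mollify (hX.intervalIntegrable hh hX0) ε
  let V : ℝ → C(Icc (-h) (0:ℝ), Fin n → ℂ) := fun τ => ⟨fun s => mollify X ε (τ + s), by fun_prop⟩
  refine ⟨hv.continuousOn, fun s => (hφ₀ s).symm, V, fun _ _ _ => rfl, fun t ht => ?_⟩
  have hderiv : HasDerivAt (fun τ => X 0 + mollify (integratedRHS RE X) ε τ)
      (mollify (fun u => RE fun s : Icc (-h) (0:ℝ) => X (u + s)) ε t) t :=
    (hasDerivAt_mollify_primitive (hX.intervalIntegrable_rhs hRE hX0) ε t).const_add _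
  rw [hRE.apply_eq_mollify hh (hX.2.1 (t + ε)) hε ht le_rfl (V t) fun _ => rfl]
  have hsol : ∀ τ ∈ Ici (0:ℝ),
      mollify X ε τ - L (V τ) = X 0 + mollify (integratedRHS RE X) ε τ := fun τ hτ => by
    rw [hX.L_apply_mollify_window hh hL₀ hΔ hLE hRE hX0 hε hτ (V τ) fun _ => rfl]
    abel
  exact hderiv.hasDerivWithinAt.congr hsol (hsol t ht)

theorem norm_mollify_le_of_nonpos (hL₀ : IsStrictlyDelayed Δ L) (hΔ : 0 < Δ)
    (hLE : SigmaExtends L LE) (hRE : SigmaExtends R RE) (hX0 : ∀ t < 0, X t = 0)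
    (hX : IsGenSol n h LE RE φ X) {ε u : ℝ} (hε : 0 < ε) (hεΔ : ε < Δ) (hu : u ≤ 0) :
    ‖mollify X ε u‖ ≤ ‖X 0‖ + ∫ r in (0:ℝ)..ε, ‖RE fun s : Icc (-h) (0:ℝ) => X (r + s)‖ := by
  have hη : ∀ x ∈ Icc 0 ε, ‖integratedRHS RE X x‖ ≤
      ∫ r in (0:ℝ)..ε, ‖RE fun s : Icc (-h) (0:ℝ) => X (r + s)‖ := fun x hx =>
    (intervalIntegral.norm_integral_le_integral_norm hx.1).trans <|
      intervalIntegral.integral_mono_interval le_rfl hx.1 hx.2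
        (Eventually.of_forall fun _ => norm_nonneg _)
        (hX.intervalIntegrable_rhs hRE hX0 0 ε).norm
  refine norm_mollify_le hε fun x hx => ?_
  rcases lt_or_ge x 0 with hx₀ | hx₀
  · rw [hX0 x hx₀, norm_zero]
    exact add_nonneg (norm_nonneg _) ((norm_nonneg _).trans (hη 0 ⟨le_rfl, hε.le⟩))
  · rw [hX.eq_add_integratedRHS hL₀ hΔ hLE hX0 hx₀,
      hX.LE_window_eq_zero hL₀ hLE hX0 hx₀ (by linarith [hx.2]), add_zero]
    exact (norm_add_le _ _).trans (add_le_add_right (hη x ⟨hx₀, by linarith [hx.2]⟩) _)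

theorem tendsto_mollify_of_tendsto_past (hh : 0 ≤ h) (hL₀ : IsStrictlyDelayed Δ L)
    (hΔ : 0 < Δ) (hΔh : Δ ≤ h) (hLE : SigmaExtends L LE) (hRE : SigmaExtends R RE)
    (hX0 : ∀ t < 0, X t = 0) (hX : IsGenSol n h LE RE φ X) {ε : ℕ → ℝ} (hε : ∀ m, 0 < ε m)
    (hε₁ : ∀ m, ε m ≤ 1) (hεlim : Tendsto ε atTop (𝓝 0)) {t : ℝ} (ht : 0 ≤ t)
    (hpast : ∀ t' ≤ t - Δ, Tendsto (fun m => mollify X (ε m) t') atTop (𝓝 (X t'))) :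
    Tendsto (fun m => mollify X (ε m) t) atTop (𝓝 (X t)) := by
  have hv := continuous_mollify (hX.intervalIntegrable hh hX0)
  let W : ℕ → C(Icc (-h) (0:ℝ), Fin n → ℂ) := fun m =>
    ⟨fun s => mollify X (ε m) (t + s), (hv (ε m)).comp (by fun_prop)⟩
  have hW : ∀ m, mollify X (ε m) t = X 0 + L (W m) + mollify (integratedRHS RE X) (ε m) t :=
    fun m => by
      rw [hX.L_apply_mollify_window hh hL₀ hΔ hLE hRE hX0 (hε m) ht (W m) fun _ => rfl]
      abel
  obtain ⟨C, hC⟩ := (hX.2.1 (t + 1)).exists_bound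
  have hLW : Tendsto (fun m => L (W m)) atTop (𝓝 (LE fun s : Icc (-h) (0:ℝ) => X (t + s))) :=
    hL₀.tendsto_sigmaExtends hLE hΔh (hX.propA_window ht)
      ⟨C, fun m s => norm_mollify_le (hε m) fun x hx =>
        hC ⟨x, by linarith [s.2.1, hx.1], by linarith [s.2.2, hx.2, hε₁ m]⟩⟩
      fun s hs => hpast _ (by linarith)
  have hG : Tendsto (fun m => mollify (integratedRHS RE X) (ε m) t) atTop
      (𝓝 (integratedRHS RE X t)) :=
    (tendsto_mollify_nhdsGT (hX.continuous_integratedRHS hRE hX0) t).comp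
      (tendsto_nhdsWithin_iff.2 ⟨hεlim, Eventually.of_forall hε⟩)
  rw [hX.eq_add_integratedRHS hL₀ hΔ hLE hX0 ht]
  simp_rw [hW]
  exact (tendsto_const_nhds.add hLW).add hG

theorem tendsto_mollify (hh : 0 ≤ h) (hL₀ : IsStrictlyDelayed Δ L) (hΔ : 0 < Δ) (hΔh : Δ ≤ h)
    (hLE : SigmaExtends L LE) (hRE : SigmaExtends R RE) (hX0 : ∀ t < 0, X t = 0)
    (hX : IsGenSol n h LE RE φ X) {ε : ℕ → ℝ} (hε : ∀ m, 0 < ε m) (hε₁ : ∀ m, ε m ≤ 1)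
    (hεlim : Tendsto ε atTop (𝓝 0)) (t : ℝ) :
    Tendsto (fun m => mollify X (ε m) t) atTop (𝓝 (X t)) := by
  have hneg : ∀ t < 0, Tendsto (fun m => mollify X (ε m) t) atTop (𝓝 (X t)) := fun t ht => by
    rw [hX0 t ht]
    refine tendsto_const_nhds.congr' ?_
    filter_upwards [hεlim.eventually_lt_const (neg_pos.2 ht)] with m hm
    exact (norm_le_zero_iff.1 <| norm_mollify_le (hε m) fun x hx => by
      rw [hX0 x (by linarith [hx.2])]; simp).symm
  suffices ∀ k : ℕ, ∀ t < k * Δ, Tendsto (fun m => mollify X (ε m) t) atTop (𝓝 (X t)) by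
    obtain ⟨k, hk⟩ := exists_nat_gt (t / Δ)
    exact this k t ((div_lt_iff₀ hΔ).1 hk)
  intro k
  induction k with
  | zero => exact fun t ht => hneg t (by simpa using ht)
  | succ k ih =>
    intro t ht
    rcases lt_or_ge t 0 with ht₀ | ht₀
    · exact hneg t ht₀
    · refine hX.tendsto_mollify_of_tendsto_past hh hL₀ hΔ hΔh hLE hRE hX0 hε hε₁ hεlim ht₀
        fun t' ht' => ih t' ?_
      push_cast at ht
      linarith

theorem norm_le_of_neutralSol_bound (hh : 0 ≤ h) (hL₀ : IsStrictlyDelayed Δ L) (hΔ : 0 < Δ)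
    (hΔh : Δ ≤ h) (hLE : SigmaExtends L LE) (hRE : SigmaExtends R RE) {c γ : ℝ} (hc : 0 ≤ c)
    (hS : ∀ (ψ : C(Icc (-h) (0:ℝ), Fin n → ℂ)) (v : ℝ → Fin n → ℂ),
      IsNeutralSol n h L R ψ v → ∀ t, 0 ≤ t → ∀ s : Icc (-h) (0:ℝ),
        ‖v (t + ↑s)‖ ≤ c * Real.exp (γ * t) * ⨆ u : Icc (-h) (0:ℝ), ‖ψ u‖)
    (hX0 : ∀ t < 0, X t = 0) (hX : IsGenSol n h LE RE φ X) {t : ℝ} (ht : 0 ≤ t) :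
    ‖X t‖ ≤ c * Real.exp (γ * t) * ‖X 0‖ := by
  let ε : ℕ → ℝ := fun m => 1 / ((m : ℝ) + 1)
  have hε : ∀ m, 0 < ε m := fun m => by positivity
  have hε₁ : ∀ m, ε m ≤ 1 := fun m => div_le_one_of_le₀ (by linarith [m.cast_nonneg (α := ℝ)])
    (by positivity)
  have hεlim : Tendsto ε atTop (𝓝 0) := tendsto_one_div_add_atTop_nhds_zero_nat
  have hv := continuous_mollify (hX.intervalIntegrable hh hX0)
  let η : ℝ → ℝ := fun δ => ∫ r in (0:ℝ)..δ, ‖RE fun s : Icc (-h) (0:ℝ) => X (r + s)‖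
  have hη : Tendsto (fun m => η (ε m)) atTop (𝓝 0) := by
    have := (intervalIntegral.continuous_primitive
      (fun a b => (hX.intervalIntegrable_rhs hRE hX0 a b).norm) 0).tendsto 0
    rw [intervalIntegral.integral_same] at this
    exact this.comp hεlim
  have hbound : ∀ᶠ m in atTop,
      ‖mollify X (ε m) t‖ ≤ c * Real.exp (γ * t) * (‖X 0‖ + η (ε m)) := by
    filter_upwards [hεlim.eventually_lt_const hΔ] with m hm
    let φ₀ : C(Icc (-h) (0:ℝ), Fin n → ℂ) := ⟨fun s => mollify X (ε m) s, by fun_prop⟩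
    have hsup : ⨆ u, ‖φ₀ u‖ ≤ ‖X 0‖ + η (ε m) :=
      Real.iSup_le (fun u => hX.norm_mollify_le_of_nonpos hL₀ hΔ hLE hRE hX0 (hε m) hm u.2.2)
        (add_nonneg (norm_nonneg _) (intervalIntegral.integral_nonneg (hε m).le
          fun _ _ => norm_nonneg _))
    have h0 : (0:ℝ) ∈ Icc (-h) 0 := ⟨by linarith, le_rfl⟩
    calc ‖mollify X (ε m) t‖ = ‖mollify X (ε m) (t + (⟨0, h0⟩ : Icc (-h) (0:ℝ)))‖ := by simp
      _ ≤ c * Real.exp (γ * t) * ⨆ u, ‖φ₀ u‖ :=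
        hS φ₀ _ (hX.isNeutralSol_mollify hh hL₀ hΔ hLE hRE hX0 (hε m) φ₀ fun _ => rfl) t ht _
      _ ≤ c * Real.exp (γ * t) * (‖X 0‖ + η (ε m)) := by gcongr
  have hlim : Tendsto (fun m => c * Real.exp (γ * t) * (‖X 0‖ + η (ε m))) atTop
      (𝓝 (c * Real.exp (γ * t) * ‖X 0‖)) := by
    simpa using tendsto_const_nhds.mul (tendsto_const_nhds.add hη)
  exact le_of_tendsto_of_tendsto
    (hX.tendsto_mollify hh hL₀ hΔ hΔh hLE hRE hX0 hε hε₁ hεlim t).norm hlim hbound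

end IsGenSol

/-- If the solution semigroup `S(t)` of the homogeneous neutral
equation satisfies `‖S(t)‖ ≤ c e^{γt}` for `t ≥ 0`, then every column `X_j` of
the fundamental solution (the generalized solution with initial value `0` on
`[-h,0)` and `e_j` at `0`) satisfies `|X_j(t)| ≤ c e^{γt}` for `t ≥ 0`. -/
theorem stmt_18 (n : ℕ) (h : ℝ) (hh : 0 < h) (Δ : ℝ) (hΔ : Δ ∈ Set.Ioo 0 h)
    (L R : C(Set.Icc (-h) (0:ℝ), Fin n → ℂ) →L[ℂ] (Fin n → ℂ))
    (hL : ∀ φ : C(Set.Icc (-h) (0:ℝ), Fin n → ℂ),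
      (∀ s : Set.Icc (-h) (0:ℝ), (↑s : ℝ) ≤ -Δ → φ s = 0) → L φ = 0)
    (LE RE : (Set.Icc (-h) (0:ℝ) → Fin n → ℂ) → Fin n → ℂ)
    (hLE : ∀ (φ : Set.Icc (-h) (0:ℝ) → Fin n → ℂ)
        (fm : ℕ → C(Set.Icc (-h) (0:ℝ), Fin n → ℂ)),
      (∃ C : ℝ, ∀ m s, ‖fm m s‖ ≤ C) →
      (∀ s, Tendsto (fun m => fm m s) atTop (𝓝 (φ s))) →
      Tendsto (fun m => L (fm m)) atTop (𝓝 (LE φ)))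
    (hRE : ∀ (φ : Set.Icc (-h) (0:ℝ) → Fin n → ℂ)
        (fm : ℕ → C(Set.Icc (-h) (0:ℝ), Fin n → ℂ)),
      (∃ C : ℝ, ∀ m s, ‖fm m s‖ ≤ C) →
      (∀ s, Tendsto (fun m => fm m s) atTop (𝓝 (φ s))) →
      Tendsto (fun m => R (fm m)) atTop (𝓝 (RE φ)))
    (c γ : ℝ) (hc : 0 ≤ c)
    (hS : ∀ (φ : C(Set.Icc (-h) (0:ℝ), Fin n → ℂ)) (v : ℝ → Fin n → ℂ),
      IsNeutralSol n h L R φ v → ∀ t, 0 ≤ t → ∀ s : Set.Icc (-h) (0:ℝ),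
        ‖v (t + ↑s)‖ ≤ c * Real.exp (γ * t) * ⨆ u : Set.Icc (-h) (0:ℝ), ‖φ u‖)
    (j : Fin n) (X : ℝ → Fin n → ℂ)
    (hX0 : ∀ t < (0:ℝ), X t = 0)
    (hXsol : IsGenSol n h LE RE
      (fun s : Set.Icc (-h) (0:ℝ) => if (↑s : ℝ) = 0 then Pi.single j 1 else 0) X) :
    ∀ t, 0 ≤ t → ‖X t‖ ≤ c * Real.exp (γ * t) := by
  intro t ht
  have hX00 : X 0 = Pi.single j 1 := by simpa using hXsol.1 ⟨0, by linarith, le_rfl⟩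
  simpa [hX00, Pi.norm_single] using
    hXsol.norm_le_of_neutralSol_bound hh.le hL hΔ.1 hΔ.2.le hLE hRE hc hS hX0 ht
end
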